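/- arXiv:1302.0734 — 8 statements merged into one kernel-verified Lean document; each statement's English description precedes it below -/
import Mathlib

section
/- Let t^a and t^b be monomials of S (a, b ∈ ℕ^s). The binomial f = t^a − t^b (not necessarily homogeneous) satisfies f(x^{e_1},…,x^{e_s}) = 0 for every x ∈ (K*)^n if and only if for every vertex v of G one has wt_{t^a}(v) ≡ wt_{t^b}(v) (mod q−1). -/
open MvPolynomial

/-- The value `x^e = x_i * x_j` of an unordered pair `e = {i,j}` of vertices. -/
noncomputable def edgeVal {V K : Type*} [CommMonoid K] (x : V → K) (e : Sym2 V) : K :=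
  Sym2.lift ⟨fun i j => x i * x j, fun i j => mul_comm _ _⟩ e

/-- The vanishing ideal `I(X)` of the algebraic toric set `X` parameterized by the
edges of the graph `G`: the ideal generated by all homogeneous polynomials vanishing
on all points `(x^{e_1}, …, x^{e_s})` with `x ∈ (K*)^n`. -/
noncomputable def vanishingIdeal (K : Type*) [Field K] {V : Type*} (G : SimpleGraph V) :
    Ideal (MvPolynomial G.edgeSet K) :=
  Ideal.span {f | (∃ d, f.IsHomogeneous d) ∧
    ∀ x : V → Kˣ,
      MvPolynomial.eval (fun e : G.edgeSet => edgeVal (fun v => (x v : K)) (e : Sym2 V)) f = 0}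

/-- The weighted degree of a vertex `v` in the weighted subgraph `H_{t^a}` of `G`
associated to the monomial `t^a`. -/
noncomputable def wt {V : Type*} [DecidableEq V] (G : SimpleGraph V) [Fintype G.edgeSet]
    (a : G.edgeSet →₀ ℕ) (v : V) : ℕ :=
  ∑ e : G.edgeSet, if v ∈ (e : Sym2 V) then a e else 0


lemma edgeVal_eq_prod {V K : Type*} [Fintype V] [DecidableEq V] [CommMonoid K]
    (G : SimpleGraph V) (x : V → K) (e : G.edgeSet) :
    edgeVal x (e : Sym2 V) = ∏ v : V, (if v ∈ (e : Sym2 V) then x v else 1) := by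
  obtain ⟨s, hs⟩ := e
  induction s using Sym2.ind with
  | _ i j =>
    have hij : i ≠ j := G.ne_of_adj hs
    have h1 : ∀ v : V, (if v ∈ s(i, j) then x v else 1)
        = (if v = i then x v else 1) * (if v = j then x v else 1) := by
      intro v
      rcases eq_or_ne v i with rfl | h1 <;> rcases eq_or_ne v j with rfl | h2 <;>
        simp_all [Sym2.mem_iff]
    show edgeVal x s(i, j) = ∏ v : V, (if v ∈ s(i, j) then x v else 1)
    simp only [h1, Finset.prod_mul_distrib, Finset.prod_ite_eq', Finset.mem_univ, if_true]
    simp [edgeVal]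

lemma eval_mono {V K : Type*} [Fintype V] [DecidableEq V] [CommSemiring K]
    (G : SimpleGraph V) [Fintype G.edgeSet] (a : G.edgeSet →₀ ℕ) (x : V → K) :
    MvPolynomial.eval (fun e : G.edgeSet => edgeVal x (e : Sym2 V))
      (monomial a 1 : MvPolynomial G.edgeSet K) = ∏ v : V, x v ^ wt G a v := by
  rw [MvPolynomial.eval_monomial, one_mul]
  rw [Finsupp.prod_fintype _ _ (fun e => pow_zero _)]
  have : ∀ e : G.edgeSet, edgeVal x (e : Sym2 V) ^ a e
      = ∏ v : V, (if v ∈ (e : Sym2 V) then x v ^ a e else 1) := by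
    intro e
    rw [edgeVal_eq_prod G x e, ← Finset.prod_pow]
    exact Finset.prod_congr rfl fun v _ => by split <;> simp
  simp only [this]
  rw [Finset.prod_comm]
  refine Finset.prod_congr rfl fun v _ => ?_
  rw [wt, ← Finset.prod_pow_eq_pow_sum]
  exact Finset.prod_congr rfl fun e _ => by split <;> simp

/-- The binomial `t^a - t^b` vanishes on the algebraic toric set
parameterized by the edges of `G` iff for every vertex `v`,
`wt_{t^a}(v) ≡ wt_{t^b}(v) (mod q-1)`. -/
theorem statement0 {V K : Type*} [Fintype V] [DecidableEq V] [Field K] [Fintype K]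
    (G : SimpleGraph V) [Fintype G.edgeSet]
    (hn : 2 ≤ Fintype.card V) (hE : G.edgeSet.Nonempty)
    (a b : G.edgeSet →₀ ℕ) :
    (∀ x : V → Kˣ,
        MvPolynomial.eval (fun e : G.edgeSet => edgeVal (fun v => (x v : K)) (e : Sym2 V))
          ((monomial a 1 : MvPolynomial G.edgeSet K) - monomial b 1) = 0) ↔
      ∀ v : V, wt G a v ≡ wt G b v [MOD Fintype.card K - 1] := by
  classical
  have key : ∀ x : V → Kˣ,
      MvPolynomial.eval (fun e : G.edgeSet => edgeVal (fun v => (x v : K)) (e : Sym2 V))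
          ((monomial a 1 : MvPolynomial G.edgeSet K) - monomial b 1) = 0
        ↔ ∏ v : V, x v ^ wt G a v = ∏ v : V, x v ^ wt G b v := by
    intro x
    rw [map_sub, sub_eq_zero, eval_mono, eval_mono]
    constructor
    · intro h
      apply Units.ext
      push_cast
      exact h
    · intro h
      have := congrArg (Units.val) h
      push_cast at this
      exact this
  constructor
  · intro h v
    obtain ⟨g, hg⟩ := IsCyclic.exists_generator (α := Kˣ)
    have horder : orderOf g = Fintype.card K - 1 := by
      rw [orderOf_eq_card_of_forall_mem_zpowers hg, Nat.card_eq_fintype_card, Fintype.card_units]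
    have hx := (key (fun w => if w = v then g else 1)).mp (h _)
    have hprod : ∀ c : G.edgeSet →₀ ℕ,
        (∏ w : V, (if w = v then g else 1) ^ wt G c w) = g ^ wt G c v := by
      intro c
      have : ∀ w : V, (if w = v then g else 1) ^ wt G c w
          = if w = v then g ^ wt G c w else 1 := by
        intro w; split <;> simp
      simp only [this]
      simp
    rw [hprod, hprod] at hx
    rw [← horder]
    exact (pow_eq_pow_iff_modEq).mp hx
  · intro h x
    apply (key x).mpr
    refine Finset.prod_congr rfl fun v _ => ?_
    apply (pow_eq_pow_iff_modEq).mpr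
    exact (h v).of_dvd (by rw [← Fintype.card_units (α := K)]; exact orderOf_dvd_card)
end

section
/- Let u_0, u_1, …, u_m, u_{m+1} be pairwise distinct vertices of G with m ≥ 2 such that {u_0,u_k} and {u_{m+1},u_k} are edges of G for all 1 ≤ k ≤ m, and let d_1,…,d_m be integers with 1 ≤ d_k ≤ q−2 and d_1+⋯+d_m = q−1. Then the type III binomial ∏_{k=1}^{m} t_{{u_0,u_k}}^{d_k} − ∏_{k=1}^{m} t_{{u_{m+1},u_k}}^{d_k} belongs to the vanishing ideal I(X). -/
open MvPolynomial

/-- The type III binomial associated to vertices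
`u₀, u_1, …, u_m, u'` and exponents `d_1, …, d_m` with `∑ d_k = q - 1` belongs to the
vanishing ideal `I(X)`. -/
theorem statement2 {V K : Type*} [Fintype V] [DecidableEq V] [Field K] [Fintype K]
    (G : SimpleGraph V)
    (m : ℕ) (hm : 2 ≤ m) (u₀ u' : V) (w : Fin m → V)
    (hinj : Function.Injective w) (hne : u₀ ≠ u')
    (hw0 : ∀ k, w k ≠ u₀) (hw1 : ∀ k, w k ≠ u')
    (h0 : ∀ k, G.Adj u₀ (w k)) (h1 : ∀ k, G.Adj u' (w k))
    (d : Fin m → ℕ) (hd1 : ∀ k, 1 ≤ d k) (hd2 : ∀ k, d k ≤ Fintype.card K - 2)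
    (hsum : ∑ k, d k = Fintype.card K - 1) :
    ((∏ k, X ⟨s(u₀, w k), G.mem_edgeSet.mpr (h0 k)⟩ ^ d k)
        - ∏ k, X ⟨s(u', w k), G.mem_edgeSet.mpr (h1 k)⟩ ^ d k :
      MvPolynomial G.edgeSet K) ∈ vanishingIdeal K G := by
  apply Ideal.subset_span
  constructor
  · refine ⟨∑ k, d k, IsHomogeneous.sub ?_ ?_⟩ <;>
      exact IsHomogeneous.prod _ _ _ (fun k _ => by simpa using (isHomogeneous_X K _).pow (d k))
  · intro x
    simp only [map_sub, map_prod, map_pow, eval_X, edgeVal, Sym2.lift_mk, mul_pow,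
      Finset.prod_mul_distrib, Finset.prod_pow_eq_pow_sum, hsum]
    rw [FiniteField.pow_card_sub_one_eq_one _ (Units.ne_zero (x u₀)),
      FiniteField.pow_card_sub_one_eq_one _ (Units.ne_zero (x u')), sub_self]
end

section
/- Let u_0, u_1, …, u_m, u_{m+1} be pairwise distinct vertices of G with m ≥ 2 such that {u_0,u_k} and {u_{m+1},u_k} are edges of G for all 1 ≤ k ≤ m. Let α be a positive integer and let d_1,…,d_m be integers with 1 ≤ d_k ≤ q−2 and d_1+⋯+d_m = α(q−1). Then the binomial f = ∏_{k=1}^{m} t_{{u_0,u_k}}^{d_k} − ∏_{k=1}^{m} t_{{u_{m+1},u_k}}^{d_k} belongs to the ideal of S generated by all type III binomials. -/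
open MvPolynomial

/-- The set of type III binomials of `G`: for each choice of pairwise distinct vertices
`u₀, u_1, …, u_m, u'` (`m ≥ 2`) with `{u₀, u_k}` and `{u', u_k}` edges of `G` for all `k`,
and exponents `1 ≤ d_k ≤ q - 2` with `∑ d_k = q - 1`, the binomial
`∏ t_{{u₀,u_k}}^{d_k} - ∏ t_{{u',u_k}}^{d_k}`. -/
def typeIII (K : Type*) [Field K] [Fintype K] {V : Type*} (G : SimpleGraph V) :
    Set (MvPolynomial G.edgeSet K) :=
  {f | ∃ (m : ℕ) (u₀ u' : V) (w : Fin m → V) (d : Fin m → ℕ)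
      (h0 : ∀ k, G.Adj u₀ (w k)) (h1 : ∀ k, G.Adj u' (w k)),
      2 ≤ m ∧ Function.Injective w ∧ u₀ ≠ u' ∧ (∀ k, w k ≠ u₀ ∧ w k ≠ u') ∧
      (∀ k, 1 ≤ d k ∧ d k ≤ Fintype.card K - 2) ∧ (∑ k, d k = Fintype.card K - 1) ∧
      f = (∏ k, X ⟨s(u₀, w k), G.mem_edgeSet.mpr (h0 k)⟩ ^ d k)
        - ∏ k, X ⟨s(u', w k), G.mem_edgeSet.mpr (h1 k)⟩ ^ d k}

set_option maxHeartbeats 1000000 in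
lemma stmt3_base {V K : Type*} [DecidableEq V] [Field K] [Fintype K]
    (G : SimpleGraph V)
    (m : ℕ) (u₀ u' : V) (w : Fin m → V)
    (hinj : Function.Injective w) (hne : u₀ ≠ u')
    (hw0 : ∀ k, w k ≠ u₀) (hw1 : ∀ k, w k ≠ u')
    (h0 : ∀ k, G.Adj u₀ (w k)) (h1 : ∀ k, G.Adj u' (w k))
    (d : Fin m → ℕ) (hd2 : ∀ k, d k ≤ Fintype.card K - 2)
    (hsum : ∑ k, d k = Fintype.card K - 1) :
    ((∏ k, X ⟨s(u₀, w k), G.mem_edgeSet.mpr (h0 k)⟩ ^ d k)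
        - ∏ k, X ⟨s(u', w k), G.mem_edgeSet.mpr (h1 k)⟩ ^ d k :
      MvPolynomial G.edgeSet K) ∈ Ideal.span (typeIII K G) := by
  apply Ideal.subset_span
  classical
  set q := Fintype.card K with hq
  have hq2 : 2 ≤ q := Fintype.one_lt_card
  set s : Finset (Fin m) := Finset.univ.filter (fun k => d k ≠ 0) with hs
  have hsum' : ∑ k ∈ s, d k = q - 1 := by
    rw [hs, Finset.sum_filter_ne_zero, hsum]
  have hcard : 2 ≤ s.card := by
    by_contra hc
    push_neg at hc
    have hb : ∑ k ∈ s, d k ≤ s.card * (q - 2) := by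
      apply Finset.sum_le_card_nsmul
      intro k _; exact hd2 k
    interval_cases h : s.card <;> omega
  set g : Fin s.card ≃ s := s.equivFin.symm with hg
  have key : ∀ (v : V) (hv : ∀ k, G.Adj v (w k)),
      (∏ j, X ⟨s(v, w (g j)), G.mem_edgeSet.mpr (hv (g j))⟩ ^ d (g j) :
        MvPolynomial G.edgeSet K)
      = ∏ k, X ⟨s(v, w k), G.mem_edgeSet.mpr (hv k)⟩ ^ d k := by
    intro v hv
    set F : Fin m → MvPolynomial G.edgeSet K :=
      fun k => X ⟨s(v, w k), G.mem_edgeSet.mpr (hv k)⟩ ^ d k with hF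
    have h1' : (∏ j, F (g j)) = ∏ x : s, F x := Equiv.prod_comp g (fun x : s => F x)
    show (∏ j, F (g j)) = ∏ k, F k
    rw [h1', Finset.prod_coe_sort s F]
    apply Finset.prod_subset (Finset.subset_univ s)
    intro x _ hx
    have hdx : d x = 0 := by
      by_contra hdx
      exact hx (Finset.mem_filter.mpr ⟨Finset.mem_univ x, hdx⟩)
    simp [hF, hdx]
  refine ⟨s.card, u₀, u', fun j => w (g j), fun j => d (g j),
    fun j => h0 (g j), fun j => h1 (g j), hcard, ?_, hne, ?_, ?_, ?_, ?_⟩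
  · intro a b hab
    exact (Equiv.injective g) (Subtype.ext (hinj hab))
  · exact fun j => ⟨hw0 _, hw1 _⟩
  · intro j
    refine ⟨?_, hd2 _⟩
    have hdx : d (g j) ≠ 0 := (Finset.mem_filter.mp (g j).2).2
    exact Nat.one_le_iff_ne_zero.mpr hdx
  · have : (∑ j, d (g j)) = ∑ x : s, d x := Equiv.sum_comp g (fun x : s => d x)
    rw [this, Finset.sum_coe_sort s d, hsum']
  · rw [key u₀ h0, key u' h1]

lemma exists_le_sum_eq {m : ℕ} (d : Fin m → ℕ) (N : ℕ) (h : N ≤ ∑ k, d k) :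
    ∃ e : Fin m → ℕ, (∀ k, e k ≤ d k) ∧ ∑ k, e k = N := by
  induction N with
  | zero => exact ⟨0, fun k => Nat.zero_le _, by simp⟩
  | succ n ih =>
    obtain ⟨e, he, hs⟩ := ih (le_of_lt (Nat.lt_of_succ_le h))
    have hex : ∃ k, e k < d k := by
      by_contra hc
      push_neg at hc
      have := Finset.sum_le_sum (fun k (_ : k ∈ Finset.univ) => hc k)
      omega
    obtain ⟨k, hk⟩ := hex
    refine ⟨Function.update e k (e k + 1), ?_, ?_⟩
    · intro j
      by_cases hj : j = k
      · subst hj; simp only [Function.update_self]; omega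
      · simp only [Function.update_of_ne hj]; exact he j
    · rw [Finset.sum_update_of_mem (Finset.mem_univ k), Finset.sdiff_singleton_eq_erase]
      have h2 := Finset.add_sum_erase Finset.univ e (Finset.mem_univ k)
      omega

set_option maxHeartbeats 1000000 in
lemma stmt3_aux {V K : Type*} [DecidableEq V] [Field K] [Fintype K]
    (G : SimpleGraph V)
    (m : ℕ) (u₀ u' : V) (w : Fin m → V)
    (hinj : Function.Injective w) (hne : u₀ ≠ u')
    (hw0 : ∀ k, w k ≠ u₀) (hw1 : ∀ k, w k ≠ u')
    (h0 : ∀ k, G.Adj u₀ (w k)) (h1 : ∀ k, G.Adj u' (w k))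
    (a : ℕ) :
    ∀ (d : Fin m → ℕ), (∀ k, d k ≤ Fintype.card K - 2) →
    (∑ k, d k = (a + 1) * (Fintype.card K - 1)) →
    ((∏ k, X ⟨s(u₀, w k), G.mem_edgeSet.mpr (h0 k)⟩ ^ d k)
        - ∏ k, X ⟨s(u', w k), G.mem_edgeSet.mpr (h1 k)⟩ ^ d k :
      MvPolynomial G.edgeSet K) ∈ Ideal.span (typeIII K G) := by
  induction a with
  | zero =>
    intro d hd2 hsum
    exact stmt3_base G m u₀ u' w hinj hne hw0 hw1 h0 h1 d hd2 (by omega)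
  | succ a ih =>
    intro d hd2 hsum
    set q := Fintype.card K with hq
    have hq2 : 2 ≤ q := Fintype.one_lt_card
    have hle : q - 1 ≤ ∑ k, d k := by
      rw [hsum]; nlinarith
    obtain ⟨e, he, hse⟩ := exists_le_sum_eq d (q - 1) hle
    set f : Fin m → ℕ := fun k => d k - e k with hf
    have hdef : ∀ k, d k = e k + f k := fun k => by
      have := he k; simp only [hf]; omega
    have hsf : ∑ k, f k = (a + 1) * (q - 1) := by
      have h3 : ∑ k, d k = ∑ k, e k + ∑ k, f k := by
        rw [← Finset.sum_add_distrib]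
        exact Finset.sum_congr rfl (fun k _ => hdef k)
      have h4 : (a + 1 + 1) * (q - 1) = (q - 1) + (a + 1) * (q - 1) := by ring
      omega
    set P0e : MvPolynomial G.edgeSet K :=
      ∏ k, X ⟨s(u₀, w k), G.mem_edgeSet.mpr (h0 k)⟩ ^ e k with hP0e
    set P1e : MvPolynomial G.edgeSet K :=
      ∏ k, X ⟨s(u', w k), G.mem_edgeSet.mpr (h1 k)⟩ ^ e k with hP1e
    set P0f : MvPolynomial G.edgeSet K :=
      ∏ k, X ⟨s(u₀, w k), G.mem_edgeSet.mpr (h0 k)⟩ ^ f k with hP0f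
    set P1f : MvPolynomial G.edgeSet K :=
      ∏ k, X ⟨s(u', w k), G.mem_edgeSet.mpr (h1 k)⟩ ^ f k with hP1f
    have hsplit0 : (∏ k, X ⟨s(u₀, w k), G.mem_edgeSet.mpr (h0 k)⟩ ^ d k :
        MvPolynomial G.edgeSet K) = P0e * P0f := by
      rw [hP0e, hP0f, ← Finset.prod_mul_distrib]
      exact Finset.prod_congr rfl (fun k _ => by rw [hdef k, pow_add])
    have hsplit1 : (∏ k, X ⟨s(u', w k), G.mem_edgeSet.mpr (h1 k)⟩ ^ d k :
        MvPolynomial G.edgeSet K) = P1e * P1f := by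
      rw [hP1e, hP1f, ← Finset.prod_mul_distrib]
      exact Finset.prod_congr rfl (fun k _ => by rw [hdef k, pow_add])
    rw [hsplit0, hsplit1]
    have hiden : P0e * P0f - P1e * P1f = P0f * (P0e - P1e) + P1e * (P0f - P1f) := by
      ring
    rw [hiden]
    apply Ideal.add_mem
    · apply Ideal.mul_mem_left
      exact stmt3_base G m u₀ u' w hinj hne hw0 hw1 h0 h1 e
        (fun k => le_trans (he k) (hd2 k)) hse
    · apply Ideal.mul_mem_left
      exact ih f (fun k => by have := hd2 k; simp only [hf]; omega) hsf

/-- If `∑ d_k = α (q - 1)` for a positive integer `α` (with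
`1 ≤ d_k ≤ q - 2`), then the corresponding binomial belongs to the ideal generated
by the type III binomials. -/
theorem statement3 {V K : Type*} [Fintype V] [DecidableEq V] [Field K] [Fintype K]
    (G : SimpleGraph V)
    (m : ℕ) (hm : 2 ≤ m) (u₀ u' : V) (w : Fin m → V)
    (hinj : Function.Injective w) (hne : u₀ ≠ u')
    (hw0 : ∀ k, w k ≠ u₀) (hw1 : ∀ k, w k ≠ u')
    (h0 : ∀ k, G.Adj u₀ (w k)) (h1 : ∀ k, G.Adj u' (w k))
    (d : Fin m → ℕ) (hd1 : ∀ k, 1 ≤ d k) (hd2 : ∀ k, d k ≤ Fintype.card K - 2)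
    (α : ℕ) (hα : 1 ≤ α) (hsum : ∑ k, d k = α * (Fintype.card K - 1)) :
    ((∏ k, X ⟨s(u₀, w k), G.mem_edgeSet.mpr (h0 k)⟩ ^ d k)
        - ∏ k, X ⟨s(u', w k), G.mem_edgeSet.mpr (h1 k)⟩ ^ d k :
      MvPolynomial G.edgeSet K) ∈ Ideal.span (typeIII K G) := by
  obtain ⟨a, rfl⟩ : ∃ a, α = a + 1 := ⟨α - 1, by omega⟩
  exact stmt3_aux G m u₀ u' w hinj hne hw0 hw1 h0 h1 a d hd2 hsum
end

section
/- Let f = t^a − t^b be a homogeneous binomial in I(X) with supp(a) ∩ supp(b) = ∅; call an edge e of G black if a_e ≥ 1 and dotted if b_e ≥ 1. Suppose there exist pairwise distinct vertices w_1, w_2, w_3, w_4 of G such that either ({w_1,w_4} is black, {w_4,w_3} is dotted, and {w_3,w_2} is black) or ({w_1,w_4} is dotted, {w_4,w_3} is black, and {w_3,w_2} is dotted), and suppose moreover that either {w_1,w_2} is an edge of G or at least one of w_1, w_2 is incident both to a black edge and to a dotted edge. Then there exist an index j ∈ {1,…,s} and a homogeneous binomial g ∈ S such that f − t_j·g belongs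 to the ideal J of S generated by all binomials of types I, II and III. -/
open MvPolynomial

/-- The set of type I binomials of `G`: `t_i^{q-1} - t_j^{q-1}` for edges `i, j`. -/
def typeI (K : Type*) [Field K] [Fintype K] {V : Type*} (G : SimpleGraph V) :
    Set (MvPolynomial G.edgeSet K) :=
  {f | ∃ i j : G.edgeSet, f = X i ^ (Fintype.card K - 1) - X j ^ (Fintype.card K - 1)}

/-- The set of type II binomials of `G`: `t_{{u₁,u₂}} t_{{u₃,u₄}} - t_{{u₂,u₃}} t_{{u₄,u₁}}`,
one for each 4-cycle of `G` on pairwise distinct vertices `u₁, u₂, u₃, u₄`. -/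
def typeII (K : Type*) [Field K] {V : Type*} (G : SimpleGraph V) :
    Set (MvPolynomial G.edgeSet K) :=
  {f | ∃ (u₁ u₂ u₃ u₄ : V) (h12 : G.Adj u₁ u₂) (h23 : G.Adj u₂ u₃) (h34 : G.Adj u₃ u₄)
      (h41 : G.Adj u₄ u₁),
      List.Pairwise (· ≠ ·) [u₁, u₂, u₃, u₄] ∧
      f = X ⟨s(u₁, u₂), G.mem_edgeSet.mpr h12⟩ * X ⟨s(u₃, u₄), G.mem_edgeSet.mpr h34⟩
        - X ⟨s(u₂, u₃), G.mem_edgeSet.mpr h23⟩ * X ⟨s(u₄, u₁), G.mem_edgeSet.mpr h41⟩}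
/-- `{x, y}` is an edge of the weighted subgraph determined by the exponent vector `a`,
i.e. it is an edge of `G` carrying positive weight. -/
def isEdgeOf {V : Type*} (G : SimpleGraph V) (a : G.edgeSet →₀ ℕ) (x y : V) : Prop :=
  ∃ h : G.Adj x y, 1 ≤ a ⟨s(x, y), G.mem_edgeSet.mpr h⟩

set_option linter.unusedSectionVars false

namespace St4Aux

variable {σ K : Type*} [DecidableEq σ] [Field K]

lemma deg_single (e : σ) : (Finsupp.single e 1).degree = 1 := by
  simp [Finsupp.degree_eq_weight_one, Finsupp.weight_apply, Finsupp.sum_single_index]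

lemma deg_add (c d : σ →₀ ℕ) : (c + d).degree = c.degree + d.degree := by
  simp [Finsupp.degree_eq_weight_one, map_add]

lemma decomp1 (a : σ →₀ ℕ) (e : σ) (h : 1 ≤ a e) :
    (a - Finsupp.single e 1) + Finsupp.single e 1 = a :=
  tsub_add_cancel_of_le (by rwa [Finsupp.single_le_iff])

lemma decomp2 (a : σ →₀ ℕ) (e e' : σ) (hne : e ≠ e') (h : 1 ≤ a e) (h' : 1 ≤ a e') :
    (a - Finsupp.single e 1 - Finsupp.single e' 1) + Finsupp.single e 1
      + Finsupp.single e' 1 = a := by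
  have hle : Finsupp.single e 1 + Finsupp.single e' 1 ≤ a := by
    rw [Finsupp.le_def]
    intro i
    simp only [Finsupp.add_apply, Finsupp.single_apply]
    by_cases h1 : e = i <;> by_cases h2 : e' = i
    · exact absurd (h1.trans h2.symm) hne
    · subst h1
      simp only [if_neg h2, if_true, eq_self_iff_true, if_pos trivial]
      simp
      omega
    · subst h2
      simp only [if_neg h1]
      simp
      omega
    · simp [h1, h2]
  rw [tsub_tsub, add_assoc]
  exact tsub_add_cancel_of_le hle

lemma mono_split1 (b : σ →₀ ℕ) (e : σ) (h : 1 ≤ b e) :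
    (monomial b (1:K) : MvPolynomial σ K) = monomial (b - Finsupp.single e 1) 1 * X e := by
  conv_lhs => rw [← decomp1 b e h]
  rw [monomial_add_single, pow_one]

lemma mono_split2 (a : σ →₀ ℕ) (e e' : σ) (hne : e ≠ e') (h : 1 ≤ a e) (h' : 1 ≤ a e') :
    (monomial a (1:K) : MvPolynomial σ K)
      = monomial (a - Finsupp.single e 1 - Finsupp.single e' 1) 1 * X e * X e' := by
  conv_lhs => rw [← decomp2 a e e' hne h h']
  rw [monomial_add_single, monomial_add_single, pow_one, pow_one]

lemma deg2 (a : σ →₀ ℕ) (e e' : σ) (hne : e ≠ e') (h : 1 ≤ a e) (h' : 1 ≤ a e') :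
    (a - Finsupp.single e 1 - Finsupp.single e' 1).degree + 2 = a.degree := by
  conv_rhs => rw [← decomp2 a e e' hne h h']
  rw [deg_add, deg_add, deg_single, deg_single]

lemma deg1 (b : σ →₀ ℕ) (e : σ) (h : 1 ≤ b e) :
    (b - Finsupp.single e 1).degree + 1 = b.degree := by
  conv_rhs => rw [← decomp1 b e h]
  rw [deg_add, deg_single]

/-- The shape of the conclusion of Statement 4. -/
def Conc (T : Set (MvPolynomial σ K)) (a b : σ →₀ ℕ) : Prop :=
  ∃ (j : σ) (g : MvPolynomial σ K),
    (∃ c d : σ →₀ ℕ, g = monomial c 1 - monomial d 1) ∧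
    (∃ m, g.IsHomogeneous m) ∧
    ((monomial a 1 : MvPolynomial σ K) - monomial b 1) - X j * g ∈ Ideal.span T

lemma swapConc {T : Set (MvPolynomial σ K)} {a b : σ →₀ ℕ}
    (h : Conc T b a) : Conc T a b := by
  obtain ⟨j, g, ⟨c, d, rfl⟩, ⟨m, hm⟩, hmem⟩ := h
  refine ⟨j, monomial d 1 - monomial c 1, ⟨d, c, rfl⟩, ⟨m, by simpa [neg_sub] using hm.neg⟩, ?_⟩
  have key : ((monomial a 1 : MvPolynomial σ K) - monomial b 1)
      - X j * (monomial d 1 - monomial c 1)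
      = -(((monomial b 1 : MvPolynomial σ K) - monomial a 1)
        - X j * (monomial c 1 - monomial d 1)) := by ring
  rw [key]
  exact neg_mem hmem

lemma moveA {T : Set (MvPolynomial σ K)} {a b : σ →₀ ℕ} (E1 E2 E3 E4 : σ)
    (hE : E1 ≠ E2) (h1 : 1 ≤ a E1) (h2 : 1 ≤ a E2) (h3 : 1 ≤ b E3)
    (hdeg : a.degree = b.degree)
    (hB : (X E1 * X E2 - X E3 * X E4 : MvPolynomial σ K) ∈ Ideal.span T) :
    Conc T a b := by
  refine ⟨E3, monomial ((a - Finsupp.single E1 1 - Finsupp.single E2 1) + Finsupp.single E4 1) 1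
      - monomial (b - Finsupp.single E3 1) 1,
    ⟨_, _, rfl⟩, ⟨(a - Finsupp.single E1 1 - Finsupp.single E2 1).degree + 1, ?_⟩, ?_⟩
  · have d2 := deg2 a E1 E2 hE h1 h2
    have d1 := deg1 b E3 h3
    exact (isHomogeneous_monomial _ (by rw [deg_add, deg_single])).sub
      (isHomogeneous_monomial _ (by omega))
  · have key : ((monomial a 1 : MvPolynomial σ K) - monomial b 1)
        - X E3 * (monomial ((a - Finsupp.single E1 1 - Finsupp.single E2 1)
            + Finsupp.single E4 1) 1 - monomial (b - Finsupp.single E3 1) 1)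
        = monomial (a - Finsupp.single E1 1 - Finsupp.single E2 1) 1
            * (X E1 * X E2 - X E3 * X E4) := by
      rw [mono_split2 a E1 E2 hE h1 h2, mono_split1 b E3 h3, monomial_add_single, pow_one]
      ring
    rw [key]
    exact Ideal.mul_mem_left _ _ hB

lemma move2 {T : Set (MvPolynomial σ K)} {a b : σ →₀ ℕ} (E1 E2 E4 F1 F2 F4 J : σ)
    (hE : E1 ≠ E2) (hF : F1 ≠ F2) (h1 : 1 ≤ a E1) (h2 : 1 ≤ a E2)
    (h3 : 1 ≤ b F1) (h4 : 1 ≤ b F2) (hdeg : a.degree = b.degree)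
    (hB1 : (X E1 * X E2 - X J * X E4 : MvPolynomial σ K) ∈ Ideal.span T)
    (hB2 : (X F1 * X F2 - X J * X F4 : MvPolynomial σ K) ∈ Ideal.span T) :
    Conc T a b := by
  refine ⟨J, monomial ((a - Finsupp.single E1 1 - Finsupp.single E2 1) + Finsupp.single E4 1) 1
      - monomial ((b - Finsupp.single F1 1 - Finsupp.single F2 1) + Finsupp.single F4 1) 1,
    ⟨_, _, rfl⟩, ⟨(a - Finsupp.single E1 1 - Finsupp.single E2 1).degree + 1, ?_⟩, ?_⟩
  · have d2 := deg2 a E1 E2 hE h1 h2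
    have d1 := deg2 b F1 F2 hF h3 h4
    exact (isHomogeneous_monomial _ (by rw [deg_add, deg_single])).sub
      (isHomogeneous_monomial _ (by rw [deg_add, deg_single]; omega))
  · have key : ((monomial a 1 : MvPolynomial σ K) - monomial b 1)
        - X J * (monomial ((a - Finsupp.single E1 1 - Finsupp.single E2 1)
              + Finsupp.single E4 1) 1
            - monomial ((b - Finsupp.single F1 1 - Finsupp.single F2 1)
              + Finsupp.single F4 1) 1)
        = monomial (a - Finsupp.single E1 1 - Finsupp.single E2 1) 1
            * (X E1 * X E2 - X J * X E4)
          - monomial (b - Finsupp.single F1 1 - Finsupp.single F2 1) 1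
            * (X F1 * X F2 - X J * X F4) := by
      rw [mono_split2 a E1 E2 hE h1 h2, mono_split2 b F1 F2 hF h3 h4,
        monomial_add_single, monomial_add_single, pow_one, pow_one]
      ring
    rw [key]
    exact sub_mem (Ideal.mul_mem_left _ _ hB1) (Ideal.mul_mem_left _ _ hB2)

end St4Aux

namespace St4Aux

lemma edge_ne {V : Type*} {G : SimpleGraph V} {x y u v : V}
    (h1 : x ≠ u ∨ y ≠ v) (h2 : x ≠ v ∨ y ≠ u) (p : s(x,y) ∈ G.edgeSet)
    (q : s(u,v) ∈ G.edgeSet) : (⟨s(x,y), p⟩ : G.edgeSet) ≠ ⟨s(u,v), q⟩ := by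
  intro h
  rw [Subtype.mk.injEq, Sym2.eq_iff] at h
  tauto

lemma isEdgeOf_symm {V : Type*} {G : SimpleGraph V} {a : G.edgeSet →₀ ℕ} {x y : V}
    (h : isEdgeOf G a x y) : isEdgeOf G a y x := by
  obtain ⟨hadj, hle⟩ := h
  refine ⟨hadj.symm, ?_⟩
  have he : (⟨s(y,x), G.mem_edgeSet.mpr hadj.symm⟩ : G.edgeSet)
      = ⟨s(x,y), G.mem_edgeSet.mpr hadj⟩ := Subtype.ext Sym2.eq_swap
  rw [he]
  exact hle

lemma typeII_mem {V K : Type*} [Field K] {G : SimpleGraph V} {u₁ u₂ u₃ u₄ : V}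
    (h12 : G.Adj u₁ u₂) (h23 : G.Adj u₂ u₃) (h34 : G.Adj u₃ u₄) (h41 : G.Adj u₄ u₁)
    (n12 : u₁ ≠ u₂) (n13 : u₁ ≠ u₃) (n14 : u₁ ≠ u₄) (n23 : u₂ ≠ u₃) (n24 : u₂ ≠ u₄)
    (n34 : u₃ ≠ u₄)
    {E1 E2 E3 E4 : G.edgeSet} (e1 : (E1 : Sym2 V) = s(u₁,u₂)) (e2 : (E2 : Sym2 V) = s(u₃,u₄))
    (e3 : (E3 : Sym2 V) = s(u₂,u₃)) (e4 : (E4 : Sym2 V) = s(u₄,u₁)) :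
    (X E1 * X E2 - X E3 * X E4 : MvPolynomial G.edgeSet K) ∈ typeII K G := by
  have hE1 : E1 = ⟨s(u₁,u₂), G.mem_edgeSet.mpr h12⟩ := Subtype.ext e1
  have hE2 : E2 = ⟨s(u₃,u₄), G.mem_edgeSet.mpr h34⟩ := Subtype.ext e2
  have hE3 : E3 = ⟨s(u₂,u₃), G.mem_edgeSet.mpr h23⟩ := Subtype.ext e3
  have hE4 : E4 = ⟨s(u₄,u₁), G.mem_edgeSet.mpr h41⟩ := Subtype.ext e4
  refine ⟨u₁, u₂, u₃, u₄, h12, h23, h34, h41, ?_, ?_⟩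
  · simp [List.pairwise_cons, n12, n13, n14, n23, n24, n34]
  · rw [hE1, hE2, hE3, hE4]

lemma key {V ι K : Type*} [DecidableEq V] [Field K] [Fintype K]
    (p : V → ι) (G : SimpleGraph V) (hAdj : ∀ x y, G.Adj x y ↔ p x ≠ p y)
    (a b : G.edgeSet →₀ ℕ) (hdisj : Disjoint a.support b.support)
    (hdeg : a.degree = b.degree)
    (w₁ w₂ w₃ w₄ : V)
    (n12 : w₁ ≠ w₂) (n13 : w₁ ≠ w₃) (n14 : w₁ ≠ w₄) (n23 : w₂ ≠ w₃) (n24 : w₂ ≠ w₄)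
    (n34 : w₃ ≠ w₄)
    (h14 : isEdgeOf G a w₁ w₄) (h43 : isEdgeOf G b w₄ w₃) (h32 : isEdgeOf G a w₃ w₂)
    (hextra : G.Adj w₁ w₂ ∨ ∃ β, isEdgeOf G b w₁ β) :
    Conc (typeI K G ∪ typeII K G ∪ typeIII K G) a b := by
  obtain ⟨A14, hA14⟩ := h14
  obtain ⟨A43, hB43⟩ := h43
  obtain ⟨A32, hA32⟩ := h32
  have notboth : ∀ e : G.edgeSet, 1 ≤ a e → 1 ≤ b e → False := by
    intro e ha hb
    have m1 : e ∈ a.support := Finsupp.mem_support_iff.mpr (by omega)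
    have m2 : e ∈ b.support := Finsupp.mem_support_iff.mpr (by omega)
    exact Finset.disjoint_left.mp hdisj m1 m2
  have spanII : ∀ f : MvPolynomial G.edgeSet K, f ∈ typeII K G →
      f ∈ Ideal.span (typeI K G ∪ typeII K G ∪ typeIII K G) := fun f hf =>
    Ideal.subset_span (Set.mem_union_left _ (Set.mem_union_right _ hf))
  have hE12 : (⟨s(w₁,w₄), G.mem_edgeSet.mpr A14⟩ : G.edgeSet)
      ≠ ⟨s(w₃,w₂), G.mem_edgeSet.mpr A32⟩ := edge_ne (Or.inl n13) (Or.inl n12) _ _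
  by_cases adj12 : G.Adj w₁ w₂
  · -- Case A : use the 4-cycle (w₁, w₄, w₃, w₂)
    exact moveA ⟨s(w₁,w₄), G.mem_edgeSet.mpr A14⟩ ⟨s(w₃,w₂), G.mem_edgeSet.mpr A32⟩
      ⟨s(w₄,w₃), G.mem_edgeSet.mpr A43⟩ ⟨s(w₂,w₁), G.mem_edgeSet.mpr adj12.symm⟩
      hE12 hA14 hA32 hB43 hdeg
      (spanII _ (typeII_mem A14 A43 A32 adj12.symm n14 n13 n12 n34.symm n24.symm n23.symm
        rfl rfl rfl rfl))
  · have hp12 : p w₁ = p w₂ := by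
      by_contra hq
      exact adj12 ((hAdj _ _).mpr hq)
    have adj24 : G.Adj w₂ w₄ := (hAdj _ _).mpr (by rw [← hp12]; exact (hAdj _ _).mp A14)
    rcases hextra with hadj | ⟨β, hβ⟩
    · exact absurd hadj adj12
    obtain ⟨Adj1β, hb1β⟩ := hβ
    have nβ4 : β ≠ w₄ := by
      intro h
      subst h
      exact notboth _ hA14 hb1β
    by_cases hβ3 : β = w₃
    · -- dotted edge {w₁, w₃}; use the 4-cycle (w₄, w₁, w₃, w₂)
      subst hβ3
      exact moveA ⟨s(w₁,w₄), G.mem_edgeSet.mpr A14⟩ ⟨s(β,w₂), G.mem_edgeSet.mpr A32⟩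
        ⟨s(w₁,β), G.mem_edgeSet.mpr Adj1β⟩ ⟨s(w₂,w₄), G.mem_edgeSet.mpr adj24⟩
        hE12 hA14 hA32 hb1β hdeg
        (spanII _ (typeII_mem A14.symm Adj1β A32 adj24 n14.symm n34.symm n24.symm
          n13 n12 n23.symm Sym2.eq_swap rfl rfl rfl))
    · by_cases adjβ3 : G.Adj β w₃
      · -- one dotted move: 4-cycle (w₃, w₄, w₁, β)
        apply swapConc
        exact moveA (a := b) (b := a) ⟨s(w₄,w₃), G.mem_edgeSet.mpr A43⟩
          ⟨s(w₁,β), G.mem_edgeSet.mpr Adj1β⟩ ⟨s(w₁,w₄), G.mem_edgeSet.mpr A14⟩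
          ⟨s(β,w₃), G.mem_edgeSet.mpr adjβ3⟩
          (edge_ne (Or.inl n14.symm) (Or.inl nβ4.symm) _ _) hB43 hb1β hA14 hdeg.symm
          (spanII _ (typeII_mem A43.symm A14.symm Adj1β adjβ3 n34 n13.symm (Ne.symm hβ3)
            n14.symm nβ4.symm Adj1β.ne Sym2.eq_swap rfl Sym2.eq_swap rfl))
      · -- two moves: 4-cycles (w₄, w₁, w₃, w₂) and (w₄, w₃, w₁, β)
        have hpβ3 : p β = p w₃ := by
          by_contra hq
          exact adjβ3 ((hAdj _ _).mpr hq)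
        have adj13 : G.Adj w₁ w₃ := (hAdj _ _).mpr (by rw [← hpβ3]; exact (hAdj _ _).mp Adj1β)
        have adjβ4 : G.Adj β w₄ := (hAdj _ _).mpr (by rw [hpβ3]; exact (hAdj _ _).mp A43.symm)
        exact move2 ⟨s(w₁,w₄), G.mem_edgeSet.mpr A14⟩ ⟨s(w₃,w₂), G.mem_edgeSet.mpr A32⟩
          ⟨s(w₂,w₄), G.mem_edgeSet.mpr adj24⟩
          ⟨s(w₄,w₃), G.mem_edgeSet.mpr A43⟩ ⟨s(w₁,β), G.mem_edgeSet.mpr Adj1β⟩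
          ⟨s(β,w₄), G.mem_edgeSet.mpr adjβ4⟩ ⟨s(w₁,w₃), G.mem_edgeSet.mpr adj13⟩
          hE12 (edge_ne (Or.inl n14.symm) (Or.inl nβ4.symm) _ _)
          hA14 hA32 hB43 hb1β hdeg
          (spanII _ (typeII_mem A14.symm adj13 A32 adj24 n14.symm n34.symm n24.symm
            n13 n12 n23.symm Sym2.eq_swap rfl rfl rfl))
          (spanII _ (typeII_mem A43 adj13.symm Adj1β adjβ4 n34.symm n14.symm nβ4.symm
            n13.symm (Ne.symm hβ3) Adj1β.ne rfl rfl Sym2.eq_swap rfl))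

end St4Aux

/-- Let `f = t^a - t^b ∈ I(X)` be a homogeneous binomial with disjoint
supports (edges with `a ≥ 1` are black, edges with `b ≥ 1` are dotted).  If there are
pairwise distinct vertices `w₁, w₂, w₃, w₄` with `{w₁,w₄}, {w₄,w₃}, {w₃,w₂}` alternately
black/dotted/black or dotted/black/dotted, and moreover `{w₁,w₂}` is an edge of `G` or
one of `w₁, w₂` is incident both to a black and to a dotted edge, then `f - t_j·g` lies
in the ideal generated by the type I, II and III binomials, for some variable `t_j` and
some homogeneous binomial `g`. -/
theorem statement4 {V ι K : Type*} [Fintype V] [DecidableEq V] [Fintype ι] [DecidableEq ι]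
    [Field K] [Fintype K]
    (p : V → ι) (hp : Function.Surjective p) (hr : 2 ≤ Fintype.card ι)
    (G : SimpleGraph V) (hAdj : ∀ x y, G.Adj x y ↔ p x ≠ p y)
    (a b : G.edgeSet →₀ ℕ) (hdisj : Disjoint a.support b.support)
    (hhom : ∃ d, ((monomial a 1 : MvPolynomial G.edgeSet K) - monomial b 1).IsHomogeneous d)
    (hf : ((monomial a 1 : MvPolynomial G.edgeSet K) - monomial b 1) ∈ vanishingIdeal K G)
    (w₁ w₂ w₃ w₄ : V) (hne : List.Pairwise (· ≠ ·) [w₁, w₂, w₃, w₄])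
    (harr : (isEdgeOf G a w₁ w₄ ∧ isEdgeOf G b w₄ w₃ ∧ isEdgeOf G a w₃ w₂) ∨
            (isEdgeOf G b w₁ w₄ ∧ isEdgeOf G a w₄ w₃ ∧ isEdgeOf G b w₃ w₂))
    (hextra : G.Adj w₁ w₂ ∨
      ((∃ z, isEdgeOf G a w₁ z) ∧ (∃ z, isEdgeOf G b w₁ z)) ∨
      ((∃ z, isEdgeOf G a w₂ z) ∧ (∃ z, isEdgeOf G b w₂ z))) :
    ∃ (j : G.edgeSet) (g : MvPolynomial G.edgeSet K),
      (∃ c d : G.edgeSet →₀ ℕ, g = monomial c 1 - monomial d 1) ∧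
      (∃ m, g.IsHomogeneous m) ∧
      ((monomial a 1 : MvPolynomial G.edgeSet K) - monomial b 1) - X j * g ∈
        Ideal.span (typeI K G ∪ typeII K G ∪ typeIII K G) := by
  classical
  show St4Aux.Conc (typeI K G ∪ typeII K G ∪ typeIII K G) a b
  have hab : a ≠ b := by
    rintro rfl
    have hedge : ∃ e : G.edgeSet, 1 ≤ a e := by
      rcases harr with ⟨⟨h, hle⟩, -, -⟩ | ⟨-, ⟨h, hle⟩, -⟩
      · exact ⟨_, hle⟩
      · exact ⟨_, hle⟩
    obtain ⟨e, he⟩ := hedge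
    have hmem : e ∈ a.support := Finsupp.mem_support_iff.mpr (by omega)
    exact Finset.disjoint_left.mp hdisj hmem hmem
  have hdeg : a.degree = b.degree := by
    obtain ⟨D, hD⟩ := hhom
    have ca : MvPolynomial.coeff a ((monomial a 1 : MvPolynomial G.edgeSet K)
        - monomial b 1) ≠ 0 := by
      rw [MvPolynomial.coeff_sub, MvPolynomial.coeff_monomial, MvPolynomial.coeff_monomial,
        if_pos rfl, if_neg (Ne.symm hab)]
      simp
    have cb : MvPolynomial.coeff b ((monomial a 1 : MvPolynomial G.edgeSet K)
        - monomial b 1) ≠ 0 := by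
      rw [MvPolynomial.coeff_sub, MvPolynomial.coeff_monomial, MvPolynomial.coeff_monomial,
        if_pos rfl, if_neg hab]
      simp
    have da : a.degree = D := by rw [Finsupp.degree_eq_weight_one]; exact hD ca
    have db : b.degree = D := by rw [Finsupp.degree_eq_weight_one]; exact hD cb
    rw [da, db]
  simp only [List.pairwise_cons, List.mem_cons, List.mem_singleton, List.not_mem_nil,
    forall_eq_or_imp, forall_eq] at hne
  obtain ⟨⟨n12, n13, n14⟩, ⟨n23, n24⟩, n34⟩ :
      (w₁ ≠ w₂ ∧ w₁ ≠ w₃ ∧ w₁ ≠ w₄) ∧ (w₂ ≠ w₃ ∧ w₂ ≠ w₄) ∧ w₃ ≠ w₄ := by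
    tauto
  rcases harr with ⟨h14, h43, h32⟩ | ⟨h14, h43, h32⟩
  · rcases hextra with hadj | ⟨⟨-, z, hz⟩ | ⟨-, z, hz⟩⟩
    · exact St4Aux.key p G hAdj a b hdisj hdeg w₁ w₂ w₃ w₄ n12 n13 n14 n23 n24 n34
        h14 h43 h32 (Or.inl hadj)
    · exact St4Aux.key p G hAdj a b hdisj hdeg w₁ w₂ w₃ w₄ n12 n13 n14 n23 n24 n34
        h14 h43 h32 (Or.inr ⟨z, hz⟩)
    · exact St4Aux.key p G hAdj a b hdisj hdeg w₂ w₁ w₄ w₃ n12.symm n24 n23 n14 n13 n34.symm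
        (St4Aux.isEdgeOf_symm h32) (St4Aux.isEdgeOf_symm h43) (St4Aux.isEdgeOf_symm h14)
        (Or.inr ⟨z, hz⟩)
  · apply St4Aux.swapConc
    rcases hextra with hadj | ⟨⟨⟨z, hz⟩, -⟩ | ⟨⟨z, hz⟩, -⟩⟩
    · exact St4Aux.key p G hAdj b a hdisj.symm hdeg.symm w₁ w₂ w₃ w₄ n12 n13 n14 n23 n24 n34
        h14 h43 h32 (Or.inl hadj)
    · exact St4Aux.key p G hAdj b a hdisj.symm hdeg.symm w₁ w₂ w₃ w₄ n12 n13 n14 n23 n24 n34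
        h14 h43 h32 (Or.inr ⟨z, hz⟩)
    · exact St4Aux.key p G hAdj b a hdisj.symm hdeg.symm w₂ w₁ w₄ w₃ n12.symm n24 n23 n14 n13
        n34.symm (St4Aux.isEdgeOf_symm h32) (St4Aux.isEdgeOf_symm h43)
        (St4Aux.isEdgeOf_symm h14) (Or.inr ⟨z, hz⟩)
end

section
/- Let t^a ∈ S be a monomial, let u_0 be a vertex of G, and let e_{i_1} = {u_0,w_1}, …, e_{i_m} = {u_0,w_m} (m ≥ 2) be distinct edges of the weighted subgraph H_{t^a} incident to u_0 (so a_{i_k} ≥ 1 for all k) such that a_{i_1}+⋯+a_{i_m} ≥ α(q−1) for some positive integer α. Let w_0 be a vertex with w_0 ≠ u_0 and such that {w_0,w_k} is an edge of G for all 1 ≤ k ≤ m. Then there exists a monomial t^b ∈ S of the same total degree as t^a such that: t^a − t^b ∈ I(X); wt_{t^b}(u_0) = wt_{t^a}(u_0) − α(q−1); the sum over 1 ≤ k ≤ m of the weights of the edges {w_0,w_k} in H_{t^b} is at least α(q−1) (in particular wt_{t^b}(w_0) ≥ α(q−1)); and wt_{t^b}(v) = wt_{t^a}(v) for every vertex v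 ∉ {u_0, w_0}. -/
/-!
Split the excess `α(q-1)` of weight on the edges `{u₀, w_k}` as `∑ c_k` with `c_k ≤ a_{u₀w_k}`
and move `c_k` from `{u₀, w_k}` to `{w₀, w_k}`. On a torus point `x` the monomial changes by
the factor `(x_{w₀} / x_{u₀})^{α(q-1)} = 1`, since every unit of `K` has order dividing `q - 1`;
the weighted degrees change only at `u₀` and `w₀`.
-/

open MvPolynomial

namespace Finsupp

theorem exists_mapDomain_le_degree_eq {ι σ : Type*} [Fintype ι] {f : ι → σ}
    (hf : Function.Injective f) (a : σ →₀ ℕ) {N : ℕ} (hN : N ≤ ∑ k, a (f k)) :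
    ∃ c : ι →₀ ℕ, c.mapDomain f ≤ a ∧ c.degree = N := by
  obtain ⟨c, hc, rfl⟩ := exists_le_degree_eq (a.comapDomain f hf.injOn) N
    (by simpa [degree_eq_sum] using hN)
  refine ⟨c, fun e => ?_, rfl⟩
  by_cases he : e ∈ Set.range f
  · obtain ⟨k, rfl⟩ := he
    rw [mapDomain_apply hf]
    simpa using hc k
  · rw [mapDomain_of_notMem_range _ _ he]
    exact Nat.zero_le _

end Finsupp

namespace SimpleGraph

variable {V ι : Type*} {G : SimpleGraph V} {u : V} {w : ι → V}

def starEdge (h : ∀ k, G.Adj u (w k)) (k : ι) : G.edgeSet :=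
  ⟨s(u, w k), G.mem_edgeSet.mpr (h k)⟩

theorem mem_starEdge (h : ∀ k, G.Adj u (w k)) {k : ι} {v : V} :
    v ∈ (starEdge h k : Sym2 V) ↔ v = u ∨ v = w k :=
  Sym2.mem_iff

theorem starEdge_injective (h : ∀ k, G.Adj u (w k)) (hw : Function.Injective w) :
    Function.Injective (starEdge h) := by
  intro j k hjk
  rcases Sym2.eq_iff.mp (congrArg Subtype.val hjk) with ⟨-, hw'⟩ | ⟨hu, -⟩
  · exact hw hw'
  · exact absurd hu (h k).ne

end SimpleGraph

open SimpleGraph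

section WeightedDegree

variable {V ι : Type*} [DecidableEq V] {G : SimpleGraph V} [Fintype G.edgeSet]

theorem wt_add (a b : G.edgeSet →₀ ℕ) (v : V) : wt G (a + b) v = wt G a v + wt G b v := by
  simp only [wt, Finsupp.add_apply, ← Finset.sum_add_distrib, ite_add_ite, add_zero]

theorem wt_mapDomain [Fintype ι] (f : ι → G.edgeSet) (c : ι →₀ ℕ) (v : V) :
    wt G (c.mapDomain f) v = ∑ k, if v ∈ (f k : Sym2 V) then c k else 0 := by
  have hsum : ∀ d : G.edgeSet →₀ ℕ,
      wt G d v = d.sum fun e n => if v ∈ (e : Sym2 V) then n else 0 :=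
    fun d => by rw [wt, Finsupp.sum_fintype _ _ fun _ => by simp]
  rw [hsum, Finsupp.sum_mapDomain_index (fun _ => by simp) fun _ _ _ => by split_ifs <;> rfl,
    Finsupp.sum_fintype _ _ fun _ => by simp]

variable {u : V} {w : ι → V} [Fintype ι]

theorem wt_mapDomain_starEdge_center (h : ∀ k, G.Adj u (w k)) (c : ι →₀ ℕ) :
    wt G (c.mapDomain (starEdge h)) u = c.degree := by
  simp [wt_mapDomain, mem_starEdge, Finsupp.degree_eq_sum]

theorem wt_mapDomain_starEdge_of_ne (h : ∀ k, G.Adj u (w k)) (c : ι →₀ ℕ) {v : V}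
    (hv : v ≠ u) : wt G (c.mapDomain (starEdge h)) v = ∑ k, if v = w k then c k else 0 := by
  simp [wt_mapDomain, mem_starEdge, hv]

end WeightedDegree

section EdgeMonomial

variable {V : Type*} {G : SimpleGraph V}

noncomputable def edgeMonomialVal {M : Type*} [CommMonoid M] (x : V → M)
    (a : G.edgeSet →₀ ℕ) : M :=
  a.prod fun e n => edgeVal x (e : Sym2 V) ^ n

variable {M N : Type*} [CommMonoid M] [CommMonoid N]

theorem edgeMonomialVal_add (x : V → M) (a b : G.edgeSet →₀ ℕ) :
    edgeMonomialVal x (a + b) = edgeMonomialVal x a * edgeMonomialVal x b :=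
  Finsupp.prod_add_index' (fun _ => pow_zero _) fun _ _ _ => pow_add _ _ _

theorem map_edgeVal (φ : M →* N) (x : V → M) (e : Sym2 V) :
    φ (edgeVal x e) = edgeVal (φ ∘ x) e := by
  induction e with
  | _ i j => simp [edgeVal]

theorem map_edgeMonomialVal (φ : M →* N) (x : V → M) (a : G.edgeSet →₀ ℕ) :
    φ (edgeMonomialVal x a) = edgeMonomialVal (φ ∘ x) a := by
  simp only [edgeMonomialVal, map_finsuppProd, map_pow, map_edgeVal]

theorem eval_monomial_edgeVal {R : Type*} [CommSemiring R] (y : V → R) (a : G.edgeSet →₀ ℕ) :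
    eval (fun e : G.edgeSet => edgeVal y (e : Sym2 V)) (monomial a 1) = edgeMonomialVal y a := by
  rw [eval_monomial, one_mul, edgeMonomialVal]

theorem edgeMonomialVal_mapDomain_starEdge {ι : Type*} [Fintype ι] {u : V} {w : ι → V}
    (x : V → M) (h : ∀ k, G.Adj u (w k)) (c : ι →₀ ℕ) :
    edgeMonomialVal x (c.mapDomain (starEdge h)) = x u ^ c.degree * ∏ k, x (w k) ^ c k := by
  rw [edgeMonomialVal, Finsupp.prod_mapDomain_index (fun _ => pow_zero _)
    fun _ _ _ => pow_add _ _ _, Finsupp.prod_fintype _ _ fun _ => pow_zero _]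
  simp [starEdge, edgeVal, mul_pow, Finset.prod_mul_distrib, Finset.prod_pow_eq_pow_sum,
    Finsupp.degree_eq_sum]

theorem monomial_sub_monomial_mem_vanishingIdeal {K : Type*} [Field K] {a b : G.edgeSet →₀ ℕ}
    (hdeg : a.degree = b.degree)
    (h : ∀ x : V → Kˣ, edgeMonomialVal x a = edgeMonomialVal x b) :
    monomial a 1 - monomial b 1 ∈ vanishingIdeal K G := by
  refine Ideal.subset_span ⟨⟨a.degree, (isHomogeneous_monomial 1 rfl).sub
    (isHomogeneous_monomial 1 hdeg.symm)⟩, fun x => ?_⟩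
  have hx : (fun v => (x v : K)) = Units.coeHom K ∘ x := rfl
  rw [map_sub, hx, eval_monomial_edgeVal, eval_monomial_edgeVal, ← map_edgeMonomialVal,
    ← map_edgeMonomialVal, h, sub_self]

theorem monomial_sub_mem_vanishingIdeal_of_add_star_eq {K ι : Type*} [Field K] [Fintype ι]
    {u u' : V} {w : ι → V} (h : ∀ k, G.Adj u (w k)) (h' : ∀ k, G.Adj u' (w k)) (c : ι →₀ ℕ)
    (hc : ∀ y : Kˣ, y ^ c.degree = 1) {a b : G.edgeSet →₀ ℕ}
    (hab : b + c.mapDomain (starEdge h) = a + c.mapDomain (starEdge h')) :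
    monomial a 1 - monomial b 1 ∈ vanishingIdeal K G := by
  have hdeg : a.degree = b.degree := by
    simpa [Finsupp.degree_mapDomain] using (congrArg Finsupp.degree hab).symm
  refine monomial_sub_monomial_mem_vanishingIdeal hdeg fun x => ?_
  have hstar : edgeMonomialVal x (c.mapDomain (starEdge h)) =
      edgeMonomialVal x (c.mapDomain (starEdge h')) := by
    simp only [edgeMonomialVal_mapDomain_starEdge, hc, one_mul]
  apply mul_right_cancel (b := edgeMonomialVal x (c.mapDomain (starEdge h)))
  rw [← edgeMonomialVal_add, ← edgeMonomialVal_add, hab, edgeMonomialVal_add,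
    edgeMonomialVal_add, hstar]

end EdgeMonomial

theorem statement6_general {V K : Type*} [DecidableEq V]
    [Field K] [Fintype K]
    (G : SimpleGraph V) [Fintype G.edgeSet]
    (a : G.edgeSet →₀ ℕ) (u₀ : V) (m : ℕ) (w : Fin m → V)
    (hinj : Function.Injective w)
    (hadj0 : ∀ k, G.Adj u₀ (w k))
    (α : ℕ)
    (hsum : α * (Fintype.card K - 1) ≤ ∑ k, a ⟨s(u₀, w k), G.mem_edgeSet.mpr (hadj0 k)⟩)
    (w₀ : V) (hw₀ : w₀ ≠ u₀) (hadjw : ∀ k, G.Adj w₀ (w k)) :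
    ∃ b : G.edgeSet →₀ ℕ,
      (∑ e, b e) = (∑ e, a e) ∧
      ((monomial a 1 : MvPolynomial G.edgeSet K) - monomial b 1) ∈ vanishingIdeal K G ∧
      wt G b u₀ = wt G a u₀ - α * (Fintype.card K - 1) ∧
      α * (Fintype.card K - 1) ≤ ∑ k, b ⟨s(w₀, w k), G.mem_edgeSet.mpr (hadjw k)⟩ ∧
      α * (Fintype.card K - 1) ≤ wt G b w₀ ∧
      ∀ v, v ≠ u₀ → v ≠ w₀ → wt G b v = wt G a v := by
  set N := α * (Fintype.card K - 1)
  have hN : ∀ y : Kˣ, y ^ N = 1 := fun y => by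
    classical rw [pow_mul', ← Fintype.card_units, pow_card_eq_one, one_pow]
  obtain ⟨c, hcU, hc⟩ := Finsupp.exists_mapDomain_le_degree_eq (starEdge_injective hadj0 hinj) a hsum
  set dU := c.mapDomain (starEdge hadj0)
  set dW := c.mapDomain (starEdge hadjw)
  set b := a - dU + dW
  have hb : b + dU = a + dW := by rw [add_right_comm, tsub_add_cancel_of_le hcU]
  have hwt : ∀ v, wt G b v + wt G dU v = wt G a v + wt G dW v := fun v => by
    rw [← wt_add, ← wt_add, hb]
  have hu₀_ne_leaf : (∑ k, if u₀ = w k then c k else 0) = 0 :=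
    Finset.sum_eq_zero fun k _ => if_neg (hadj0 k).ne
  have hw₀_ne_leaf : (∑ k, if w₀ = w k then c k else 0) = 0 :=
    Finset.sum_eq_zero fun k _ => if_neg (hadjw k).ne
  refine ⟨b, ?_, monomial_sub_mem_vanishingIdeal_of_add_star_eq hadj0 hadjw c (hc ▸ hN) hb,
    ?_, ?_, ?_, ?_⟩
  · simpa [← Finsupp.degree_eq_sum, dU, dW] using congrArg Finsupp.degree hb
  · have := hwt u₀
    rw [wt_mapDomain_starEdge_center, wt_mapDomain_starEdge_of_ne hadjw c hw₀.symm, hu₀_ne_leaf,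
      hc] at this
    omega
  · calc N = ∑ k, c k := by rw [← hc, Finsupp.degree_eq_sum]
      _ ≤ _ := Finset.sum_le_sum fun k _ => by
        rw [← Finsupp.mapDomain_apply (starEdge_injective hadjw hinj) c k]
        exact Finsupp.le_def.mp le_add_self _
  · have := hwt w₀
    rw [wt_mapDomain_starEdge_center, wt_mapDomain_starEdge_of_ne hadj0 c hw₀, hw₀_ne_leaf,
      hc] at this
    omega
  · intro v hvu hvw
    have := hwt v
    rw [wt_mapDomain_starEdge_of_ne hadj0 c hvu, wt_mapDomain_starEdge_of_ne hadjw c hvw] at this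
    omega

/-- (Moving weight `α(q-1)` off a vertex.)  Given a monomial `t^a`, a
vertex `u₀` with distinct incident edges `{u₀, w_k}` (`m ≥ 2`) of `H_{t^a}` whose total
weight is at least `α(q-1)`, and a vertex `w₀ ≠ u₀` joined in `G` to every `w_k`, there
is a monomial `t^b` of the same total degree with `t^a - t^b ∈ I(X)`,
`wt_{t^b}(u₀) = wt_{t^a}(u₀) - α(q-1)`, total weight at least `α(q-1)` on the edges
`{w₀, w_k}` (hence `wt_{t^b}(w₀) ≥ α(q-1)`), and all other weighted degrees unchanged. -/
theorem statement6 {V ι K : Type*} [Fintype V] [DecidableEq V] [Fintype ι] [DecidableEq ι]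
    [Field K] [Fintype K]
    (p : V → ι) (hp : Function.Surjective p) (hr : 2 ≤ Fintype.card ι)
    (G : SimpleGraph V) [Fintype G.edgeSet] (hAdj : ∀ x y, G.Adj x y ↔ p x ≠ p y)
    (a : G.edgeSet →₀ ℕ) (u₀ : V) (m : ℕ) (hm : 2 ≤ m) (w : Fin m → V)
    (hinj : Function.Injective w)
    (hadj0 : ∀ k, G.Adj u₀ (w k))
    (hpos : ∀ k, 1 ≤ a ⟨s(u₀, w k), G.mem_edgeSet.mpr (hadj0 k)⟩)
    (α : ℕ) (hα : 1 ≤ α)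
    (hsum : α * (Fintype.card K - 1) ≤ ∑ k, a ⟨s(u₀, w k), G.mem_edgeSet.mpr (hadj0 k)⟩)
    (w₀ : V) (hw₀ : w₀ ≠ u₀) (hadjw : ∀ k, G.Adj w₀ (w k)) :
    ∃ b : G.edgeSet →₀ ℕ,
      (∑ e, b e) = (∑ e, a e) ∧
      ((monomial a 1 : MvPolynomial G.edgeSet K) - monomial b 1) ∈ vanishingIdeal K G ∧
      wt G b u₀ = wt G a u₀ - α * (Fintype.card K - 1) ∧
      α * (Fintype.card K - 1) ≤ ∑ k, b ⟨s(w₀, w k), G.mem_edgeSet.mpr (hadjw k)⟩ ∧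
      α * (Fintype.card K - 1) ≤ wt G b w₀ ∧
      ∀ v, v ≠ u₀ → v ≠ w₀ → wt G b v = wt G a v :=
  statement6_general G a u₀ m w hinj hadj0 α hsum w₀ hw₀ hadjw
end

section
/- Suppose r ≥ 3 and n = α_1+⋯+α_r ≥ 4, and set d* = max{α_1(q−2), …, α_r(q−2), ⌈(n−1)(q−2)/2⌉}. Then for every integer d ≥ 0, the dimension over K of the degree-d homogeneous component of S/I(X) equals (q−1)^{n−1} if and only if d ≥ d*. (Equivalently, since S/I(X) is a 1-dimensional Cohen–Macaulay graded ring whose Hilbert function strictly increases until it reaches the constant value |X| = (q−1)^{n−1}, the Castelnuovo–Mumford regularity of S/I(X) equals d*.) -/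
open MvPolynomial

/-- The Hilbert function of `S/I(X)`: the `K`-dimension of the degree-`d` homogeneous
component of `S/I(X)`, i.e. of the quotient of the space of homogeneous polynomials of
degree `d` by its subspace of elements lying in `I(X)`. -/
noncomputable def hilbFn (K : Type*) [Field K] {V : Type*} (G : SimpleGraph V) (d : ℕ) : ℕ :=
  Module.finrank K
    (↥(homogeneousSubmodule G.edgeSet K d) ⧸
      Submodule.comap (homogeneousSubmodule G.edgeSet K d).subtype
        ((vanishingIdeal K G).restrictScalars K))

/-!
Evaluating forms of degree `d` at the points of `X` identifies `(S/I(X))_d` with the span of the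
characters `x ↦ ∏ₑ (x^e)^{aₑ}` of `(K*)ⁿ` with `deg a = d`. Distinct characters are linearly
independent, and since `K*` is cyclic of order `q - 1`, the character of `a` is determined by the
degree vector of the edge multiset `a` modulo `q - 1`. Hence `dim (S/I(X))_d` is the number of
residues modulo `q - 1` of degree vectors of `d`-edge multisets; they lie in the slice
`∑ᵥ cᵥ = 2d`, which has `(q-1)^{n-1}` elements.

In the complete multipartite graph, `D : V → ℕ` is the degree vector of `d` edges iff
`∑ D = 2d` and every part sum is at most `d`. If `d < d*`, the residue vector equal to `-1` on a
part of size `αᵢ > d/(q-2)` (resp. on all vertices but one) is not attained. If `d ≥ d*`, every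
vector of the slice lifts to such a `D`: starting from its representatives in `[0, q-2]`, add
multiples of `q - 1` to parts that still have room; `r ≥ 3` and `n ≥ 4` make the room suffice.
-/

open Finset

section MonomialCharacter

variable {K M σ : Type*} [Field K] [Monoid M]

noncomputable def monomialChar (P : σ → M →* K) (a : σ →₀ ℕ) : M →* K :=
  a.prod fun e k => P e ^ k

lemma eval_monomial_eq_monomialChar (P : σ → M →* K) (a : σ →₀ ℕ) (c : K) (x : M) :
    eval (fun e => P e x) (monomial a c) = c * monomialChar P a x := by
  rw [eval_monomial, monomialChar, MonoidHom.finsuppProd_apply]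
  rfl

noncomputable def homogeneousEval (P : σ → M →* K) (d : ℕ) :
    homogeneousSubmodule σ K d →ₗ[K] (M → K) where
  toFun f x := eval (fun e => P e x) f.1
  map_add' f g := funext fun x => by simp
  map_smul' c f := funext fun x => by simp [MvPolynomial.smul_eq_C_mul]

lemma range_homogeneousEval (P : σ → M →* K) (d : ℕ) :
    LinearMap.range (homogeneousEval P d) =
      Submodule.span K ((fun a => ⇑(monomialChar P a)) '' {a | a.degree = d}) := by
  apply le_antisymm
  · rintro - ⟨⟨f, hf⟩, rfl⟩
    have hexp : homogeneousEval P d ⟨f, hf⟩ =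
        ∑ a ∈ f.support, coeff a f • ⇑(monomialChar P a) := by
      funext x
      simp only [homogeneousEval, LinearMap.coe_mk, AddHom.coe_mk, Finset.sum_apply,
        Pi.smul_apply, smul_eq_mul]
      conv_lhs => rw [f.as_sum]
      simp only [map_sum, eval_monomial_eq_monomialChar]
    rw [hexp]
    refine Submodule.sum_mem _ fun a ha => Submodule.smul_mem _ _ (Submodule.subset_span ?_)
    refine ⟨a, ?_, rfl⟩
    rw [Set.mem_ofPred_eq, Finsupp.degree_eq_weight_one]
    exact (mem_homogeneousSubmodule _ _).mp hf (mem_support_iff.mp ha)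
  · rw [Submodule.span_le]
    rintro - ⟨a, ha, rfl⟩
    refine ⟨⟨monomial a 1, (mem_homogeneousSubmodule _ _).mpr (isHomogeneous_monomial 1 ha)⟩, ?_⟩
    funext x
    simp [homogeneousEval, eval_monomial_eq_monomialChar]

lemma finrank_quotient_ker_homogeneousEval (P : σ → M →* K) (d : ℕ) :
    Module.finrank K (homogeneousSubmodule σ K d ⧸ LinearMap.ker (homogeneousEval P d)) =
      ((fun a => ⇑(monomialChar P a)) '' {a | a.degree = d}).ncard := by
  have hind : LinearIndepOn K id ((fun a => ⇑(monomialChar P a)) '' {a | a.degree = d}) :=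
    (linearIndependent_monoidHom M K).linearIndepOn_id.mono <| by
      rintro - ⟨a, -, rfl⟩
      exact ⟨_, rfl⟩
  rw [(LinearMap.quotKerEquivRange _).finrank_eq, range_homogeneousEval, Module.finrank,
    rank_span_set hind]
  rfl

end MonomialCharacter

lemma prod_pow_val_injective {V Γ : Type*} [Fintype V] [DecidableEq V] [CommGroup Γ] [Finite Γ]
    [IsCyclic Γ] :
    Function.Injective fun (c : V → ZMod (Nat.card Γ)) (x : V → Γ) => ∏ v, x v ^ (c v).val := by
  have : NeZero (Nat.card Γ) := ⟨Nat.card_pos.ne'⟩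
  obtain ⟨g, hg⟩ := IsCyclic.exists_generator (α := Γ)
  intro c c' h
  funext v
  have hv := congrFun h (Pi.mulSingle v g)
  simp only [Pi.mulSingle_apply, ite_pow, one_pow, prod_ite_eq', mem_univ, if_true] at hv
  rw [pow_eq_pow_iff_modEq, orderOf_eq_card_of_forall_mem_zpowers hg] at hv
  simpa using (ZMod.natCast_eq_natCast_iff _ _ _).mpr hv

def sumSlice (V : Type*) [Fintype V] (t : ℕ) (s : ZMod t) : Set (V → ZMod t) :=
  {c | ∑ v, c v = s}

lemma ncard_sumSlice (V : Type*) [Fintype V] [Nonempty V] (t : ℕ) [NeZero t] (s : ZMod t) :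
    (sumSlice V t s).ncard = t ^ (Fintype.card V - 1) := by
  classical
  obtain ⟨v₀⟩ := ‹Nonempty V›
  let σ : (V → ZMod t) →+ ZMod t := ∑ v, Pi.evalAddMonoidHom (fun _ => ZMod t) v
  have hσ : ∀ c, σ c = ∑ v, c v := fun c => by simp [σ]
  have hrange : ∀ s', s' ∈ Set.range σ := fun s' => ⟨Pi.single v₀ s', by simp [hσ]⟩
  have hfib : ∀ s', #{c | σ c = s'} = #{c | σ c = s} := fun s' =>
    AddMonoidHom.card_fiber_eq_of_mem_range σ (hrange s') (hrange s)
  have htotal : t ^ Fintype.card V = t * #{c | σ c = s} :=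
    calc t ^ Fintype.card V = #(univ : Finset (V → ZMod t)) := by simp [ZMod.card]
      _ = ∑ s', #{c | σ c = s'} := card_eq_sum_card_fiberwise fun _ _ => mem_univ _
      _ = t * #{c | σ c = s} := by simp [hfib, ZMod.card]
  rw [← Nat.sub_add_cancel Fintype.card_pos, pow_succ, mul_comm] at htotal
  rw [sumSlice, Set.ncard_eq_toFinset_card', Set.toFinset_ofPred]
  simp only [← hσ]
  exact (Nat.eq_of_mul_eq_mul_left (Nat.pos_of_neZero t) htotal).symm

lemma sub_one_le_of_natCast_eq_neg_one {t N : ℕ} (h : (N : ZMod t) = -1) : t - 1 ≤ N := by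
  rcases t with _ | t
  · exact absurd h (by simp)
  · have := congrArg ZMod.val h
    rw [ZMod.val_natCast, ZMod.val_neg_one] at this
    have := Nat.mod_le N (t + 1)
    omega

lemma exists_ne_pos_pos_of_sum_eq {ι : Type*} [Fintype ι] (T : ι → ℕ) (d : ℕ)
    (hsum : ∑ i, T i = 2 * (d + 1)) (hle : ∀ i, T i ≤ d + 1) :
    ∃ i j, i ≠ j ∧ 0 < T i ∧ 0 < T j ∧ ∀ k, k ≠ i → k ≠ j → T k ≤ d := by
  classical
  have hne : (univ : Finset ι).Nonempty := by
    by_contra h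
    simp [not_nonempty_iff_eq_empty.mp h] at hsum
  obtain ⟨i, -, hi⟩ := exists_max_image univ T hne
  have hsplit_i := add_sum_erase univ T (mem_univ i)
  have hne' : (univ.erase i).Nonempty := by
    by_contra h
    rw [not_nonempty_iff_eq_empty.mp h, sum_empty] at hsplit_i
    have := hle i
    omega
  obtain ⟨j, hj, hjmax⟩ := exists_max_image (univ.erase i) T hne'
  have hsplit_j := add_sum_erase (univ.erase i) T hj
  have hbound := sum_le_card_nsmul (univ.erase i) T (T j) hjmax
  have hTi := hle i
  have hji := hi j (mem_univ j)
  have hTj : 0 < T j := by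
    by_contra h
    have : ∑ k ∈ univ.erase i, T k = 0 := by simpa [Nat.eq_zero_of_not_pos h] using hbound
    omega
  refine ⟨i, j, (ne_of_mem_erase hj).symm, hTj.trans_le hji, hTj, fun k hki hkj => ?_⟩
  have hkj' := hjmax k (mem_erase.mpr ⟨hki, mem_univ k⟩)
  have hk := single_le_sum (fun l _ => Nat.zero_le (T l))
    (mem_erase.mpr ⟨hkj, mem_erase.mpr ⟨hki, mem_univ k⟩⟩)
  omega

section DegreeVector

variable {V : Type*} [DecidableEq V] {G : SimpleGraph V}

def incidence (e : Sym2 V) : V → ℕ :=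
  Sym2.lift ⟨fun u w => Pi.single u 1 + Pi.single w 1, fun _ _ => add_comm _ _⟩ e

lemma sum_incidence_mk (A : Finset V) (u w : V) :
    ∑ v ∈ A, incidence s(u, w) v = (if u ∈ A then 1 else 0) + (if w ∈ A then 1 else 0) := by
  simp [incidence, Finset.sum_add_distrib, Finset.sum_pi_single']

lemma incidence_mk_le {u w : V} (huw : u ≠ w) {D : V → ℕ} (hu : D u ≠ 0) (hw : D w ≠ 0) :
    incidence s(u, w) ≤ D := fun v => by
  simp only [incidence, Sym2.lift_mk, Pi.add_apply, Pi.single_apply]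
  split_ifs with hvu hvw hvw
  · exact absurd (hvu.symm.trans hvw) huw
  · rw [hvu]; omega
  · rw [hvw]; omega
  · omega

lemma edgeVal_eq_prod_s8 [Fintype V] {M : Type*} [CommMonoid M] (x : V → M) (e : Sym2 V) :
    edgeVal x e = ∏ v, x v ^ incidence e v := by
  induction e using Sym2.inductionOn with
  | hf u w =>
    simp only [edgeVal, incidence, Sym2.lift_mk, Pi.add_apply, pow_add, prod_mul_distrib]
    simp [Pi.single_apply, pow_ite]

variable (G) in
noncomputable def degVec : (G.edgeSet →₀ ℕ) →ₗ[ℕ] (V → ℕ) :=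
  Finsupp.linearCombination ℕ fun e => incidence (e : Sym2 V)

lemma sum_degVec [Fintype V] (a : G.edgeSet →₀ ℕ) : ∑ v, degVec G a v = 2 * a.degree := by
  induction a using Finsupp.induction_linear with
  | zero => simp
  | add a b ha hb => simp only [map_add, Pi.add_apply, sum_add_distrib, ha, hb]; ring
  | single e k =>
    obtain ⟨e, he⟩ := e
    induction e using Sym2.inductionOn with
    | hf u w => simp [degVec, ← mul_sum, sum_incidence_mk, mul_comm]

lemma sum_degVec_le_degree {A : Finset V} (hA : G.IsIndepSet (A : Set V))
    (a : G.edgeSet →₀ ℕ) : ∑ v ∈ A, degVec G a v ≤ a.degree := by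
  induction a using Finsupp.induction_linear with
  | zero => simp
  | add a b ha hb => simp only [map_add, Pi.add_apply, sum_add_distrib]; omega
  | single e k =>
    obtain ⟨e, he⟩ := e
    induction e using Sym2.inductionOn with
    | hf u w =>
      have : ¬ (u ∈ A ∧ w ∈ A) := fun ⟨hu, hw⟩ => hA hu hw (G.ne_of_adj he) he
      simp only [degVec, Finsupp.linearCombination_single, Pi.smul_apply, smul_eq_mul, ← mul_sum,
        sum_incidence_mk, Finsupp.degree_single]
      split_ifs <;> simp_all

variable (G) in
def degResidues (t d : ℕ) : Set (V → ZMod t) :=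
  (fun a v => (degVec G a v : ZMod t)) '' {a | a.degree = d}

lemma degResidues_subset_sumSlice [Fintype V] (t d : ℕ) :
    degResidues G t d ⊆ sumSlice V t (2 * d : ℕ) := by
  rintro - ⟨a, rfl, rfl⟩
  simp [sumSlice, ← Nat.cast_sum, sum_degVec]

lemma exists_mem_sumSlice_forall_mem_eq_neg_one [Fintype V] {t : ℕ} (s : ZMod t) {A : Finset V}
    {v₀ : V} (hv₀ : v₀ ∉ A) : ∃ c ∈ sumSlice V t s, ∀ v ∈ A, c v = -1 := by
  let c₀ : V → ZMod t := fun v => if v ∈ A then -1 else 0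
  refine ⟨c₀ + Pi.single v₀ (s - ∑ v, c₀ v), by simp [sumSlice, sum_add_distrib], fun v hv => ?_⟩
  simp [c₀, hv, show v ≠ v₀ from fun h => hv₀ (h ▸ hv)]

lemma exists_card_mul_le_sum_degVec [Fintype V] {t d : ℕ}
    (h : sumSlice V t (2 * d : ℕ) ⊆ degResidues G t d) {A : Finset V} {v₀ : V} (hv₀ : v₀ ∉ A) :
    ∃ a : G.edgeSet →₀ ℕ, a.degree = d ∧ #A * (t - 1) ≤ ∑ v ∈ A, degVec G a v := by
  obtain ⟨c, hc, hcA⟩ := exists_mem_sumSlice_forall_mem_eq_neg_one ((2 * d : ℕ) : ZMod t) hv₀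
  obtain ⟨a, ha, rfl⟩ := h hc
  refine ⟨a, ha, ?_⟩
  rw [← smul_eq_mul]
  exact card_nsmul_le_sum _ _ _ fun v hv => sub_one_le_of_natCast_eq_neg_one (hcA v hv)

end DegreeVector

section Toric

variable {V K : Type*} [Field K]

noncomputable def edgeChar (e : Sym2 V) : (V → Kˣ) →* K where
  toFun x := edgeVal (fun v => (x v : K)) e
  map_one' := by induction e using Sym2.inductionOn; simp [edgeVal]
  map_mul' x y := by
    induction e using Sym2.inductionOn
    simp only [edgeVal, Pi.mul_apply, Units.val_mul, Sym2.lift_mk]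
    ring

lemma ker_homogeneousEval_edgeChar (G : SimpleGraph V) (d : ℕ) :
    LinearMap.ker (homogeneousEval (fun e : G.edgeSet => edgeChar (K := K) (e : Sym2 V)) d) =
      Submodule.comap (homogeneousSubmodule G.edgeSet K d).subtype
        ((vanishingIdeal K G).restrictScalars K) := by
  ext ⟨f, hf⟩
  simp only [LinearMap.mem_ker, Submodule.mem_comap, Submodule.restrictScalars_mem,
    Submodule.subtype_apply]
  constructor
  · intro h
    exact Ideal.subset_span ⟨⟨d, (mem_homogeneousSubmodule _ _).mp hf⟩, fun x => congrFun h x⟩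
  · intro h
    funext x
    have hle : vanishingIdeal K G ≤
        RingHom.ker (eval fun e : G.edgeSet => edgeChar (K := K) (e : Sym2 V) x) := by
      rw [_root_.vanishingIdeal, Ideal.span_le]
      rintro g ⟨-, hg⟩
      exact hg x
    exact hle h

variable [DecidableEq V] [Fintype V]

lemma monomialChar_edgeChar_apply {G : SimpleGraph V} (a : G.edgeSet →₀ ℕ) (x : V → Kˣ) :
    monomialChar (fun e : G.edgeSet => edgeChar (K := K) (e : Sym2 V)) a x =
      ∏ v, (x v : K) ^ degVec G a v := by
  induction a using Finsupp.induction_linear with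
  | zero => simp [monomialChar]
  | add a b ha hb =>
    rw [monomialChar, Finsupp.prod_add_index' (fun _ => pow_zero _) (fun _ _ _ => pow_add _ _ _),
      MonoidHom.mul_apply, ← monomialChar, ← monomialChar, ha, hb, map_add, ← prod_mul_distrib]
    simp [pow_add]
  | single e k =>
    simp [monomialChar, degVec, edgeChar, edgeVal_eq_prod_s8, ← prod_pow, ← pow_mul, mul_comm]

lemma hilbFn_eq_ncard_degResidues [Fintype K] (G : SimpleGraph V) (d : ℕ) :
    hilbFn K G d = (degResidues G (Nat.card Kˣ) d).ncard := by
  set H : (V → ZMod (Nat.card Kˣ)) → (V → Kˣ) → K :=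
    fun c x => ((∏ v, x v ^ (c v).val : Kˣ) : K) with hH
  have hHinj : Function.Injective H :=
    (Function.Injective.comp_left Units.val_injective).comp prod_pow_val_injective
  have hchar : (fun a => ⇑(monomialChar (fun e : G.edgeSet => edgeChar (K := K) (e : Sym2 V)) a)) =
      H ∘ fun a v => (degVec G a v : ZMod (Nat.card Kˣ)) := by
    funext a x
    simp only [hH, Function.comp_apply, ZMod.val_natCast, pow_mod_natCard]
    simp only [monomialChar_edgeChar_apply, Units.coe_prod, Units.val_pow_eq_pow_val]
  rw [hilbFn, ← ker_homogeneousEval_edgeChar, finrank_quotient_ker_homogeneousEval, hchar,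
    Set.image_comp, Set.ncard_image_of_injective _ hHinj, degResidues]

end Toric

lemma card_sub_one_mul_le_card_sub_two_mul {V ι : Type*} [Fintype V] [Fintype ι] [DecidableEq ι]
    {p : V → ι} (hp : Function.Surjective p) (hr : 3 ≤ Fintype.card ι)
    (hn : 4 ≤ Fintype.card V) {m d : ℕ} (hpart : ∀ i, #{v | p v = i} * m ≤ d)
    (hall : (Fintype.card V - 1) * m ≤ 2 * d) :
    (Fintype.card ι - 1) * m ≤ (Fintype.card ι - 2) * d := by
  have hrn := Fintype.card_le_of_surjective p hp
  rcases (show Fintype.card ι = 3 ∨ 4 ≤ Fintype.card ι by omega) with h3 | h4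
  · obtain ⟨i, hi⟩ := Fintype.exists_lt_card_fiber_of_mul_lt_card p (n := 1) (by omega)
    have := hpart i
    rw [h3]
    nlinarith
  · calc (Fintype.card ι - 1) * m ≤ (Fintype.card V - 1) * m := by gcongr
      _ ≤ 2 * d := hall
      _ ≤ (Fintype.card ι - 2) * d := by gcongr; omega

section CompleteMultipartite

variable {V ι : Type*} [Fintype V] [DecidableEq V] [Fintype ι] [DecidableEq ι]
  {G : SimpleGraph V} {p : V → ι}

lemma exists_degVec_eq (hAdj : ∀ x y, G.Adj x y ↔ p x ≠ p y) (d : ℕ) (D : V → ℕ)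
    (hsum : ∑ v, D v = 2 * d) (hpart : ∀ i, ∑ v with p v = i, D v ≤ d) :
    ∃ a : G.edgeSet →₀ ℕ, a.degree = d ∧ degVec G a = D := by
  induction d generalizing D with
  | zero =>
    refine ⟨0, map_zero _, funext fun v => ?_⟩
    simp only [mul_zero, sum_eq_zero_iff, mem_univ, true_implies] at hsum
    simp [hsum v]
  | succ d ih =>
    -- peel off an edge `uw` joining the two parts with the largest sums
    obtain ⟨i, j, hij, hi, hj, hrest⟩ := exists_ne_pos_pos_of_sum_eq
      (fun i => ∑ v with p v = i, D v) d (by rw [sum_fiberwise, hsum]) hpart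
    obtain ⟨u, hu, hDu⟩ := exists_ne_zero_of_sum_ne_zero hi.ne'
    obtain ⟨w, hw, hDw⟩ := exists_ne_zero_of_sum_ne_zero hj.ne'
    rw [mem_filter_univ] at hu hw
    have hadj : G.Adj u w := (hAdj u w).2 (by rw [hu, hw]; exact hij)
    have hle := incidence_mk_le (G.ne_of_adj hadj) hDu hDw
    have hsub (A : Finset V) : ∑ v ∈ A, (D - incidence s(u, w)) v =
        ∑ v ∈ A, D v - ((if u ∈ A then 1 else 0) + (if w ∈ A then 1 else 0)) := by
      simp only [Pi.sub_apply]
      rw [sum_tsub_distrib A fun v _ => hle v, sum_incidence_mk]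
    have hpart' (k : ι) : ∑ v with p v = k, (D - incidence s(u, w)) v ≤ d := by
      have := hpart k
      rw [hsub]
      simp only [mem_filter_univ, hu, hw]
      split_ifs with hik hjk hjk
      · exact absurd (hik.trans hjk.symm) hij
      · omega
      · omega
      · have := hrest k (Ne.symm hik) (Ne.symm hjk)
        omega
    obtain ⟨a, ha, haD⟩ := ih (D - incidence s(u, w))
      (by rw [hsub, hsum]; simp only [mem_univ, if_true]; omega) hpart'
    refine ⟨a + Finsupp.single ⟨s(u, w), hadj⟩ 1, by simp [ha], ?_⟩
    rw [map_add, haD, degVec, Finsupp.linearCombination_single, one_smul]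
    exact tsub_add_cancel_of_le hle

lemma exists_modEq_sum_eq (hp : Function.Surjective p) (hι : 2 ≤ Fintype.card ι) {t d : ℕ}
    (ht : 0 < t) (hroom : (Fintype.card ι - 1) * (t - 1) ≤ (Fintype.card ι - 2) * d) (K : ℕ)
    (D : V → ℕ) (hpart : ∀ i, ∑ v with p v = i, D v ≤ d) (hsum : ∑ v, D v + t * K = 2 * d) :
    ∃ D' : V → ℕ, (∀ v, D' v ≡ D v [MOD t]) ∧ ∑ v, D' v = 2 * d ∧
      ∀ i, ∑ v with p v = i, D' v ≤ d := by
  induction K generalizing D with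
  | zero => exact ⟨D, fun _ => rfl, by simpa using hsum, hpart⟩
  | succ K ih =>
    obtain ⟨i, hi⟩ : ∃ i, ∑ v with p v = i, D v + t ≤ d := by
      by_contra! hfull
      have hsum_le : Fintype.card ι * (d + 1) ≤ ∑ v, D v + Fintype.card ι * t :=
        calc Fintype.card ι * (d + 1) = ∑ _i : ι, (d + 1) := by simp
          _ ≤ ∑ i, (∑ v with p v = i, D v + t) := sum_le_sum fun i _ => hfull i
          _ = ∑ v, D v + Fintype.card ι * t := by rw [sum_add_distrib, sum_fiberwise]; simp
      obtain ⟨r, hr⟩ := Nat.exists_eq_add_of_le hι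
      obtain ⟨s, rfl⟩ := Nat.exists_eq_add_of_le' ht
      rw [hr] at hroom hsum_le
      simp only [Nat.add_sub_cancel, show 2 + r - 1 = r + 1 by omega,
        show 2 + r - 2 = r by omega] at hroom
      nlinarith
    obtain ⟨u, rfl⟩ := hp i
    obtain ⟨D', hD'D, hD'sum, hD'part⟩ := ih (D + Pi.single u t)
      (fun k => by
        simp only [Pi.add_apply, sum_add_distrib, sum_pi_single', mem_filter_univ]
        split_ifs with hk
        · rw [← hk]; exact hi
        · simpa using hpart k)
      (by simp only [Pi.add_apply, sum_add_distrib, sum_pi_single', mem_univ, if_true]; linarith)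
    refine ⟨D', fun v => (hD'D v).trans ?_, hD'sum, hD'part⟩
    simp only [Pi.add_apply, Pi.single_apply]
    split_ifs
    · exact Nat.add_modEq_right
    · rfl

lemma sumSlice_subset_degResidues (hp : Function.Surjective p)
    (hAdj : ∀ x y, G.Adj x y ↔ p x ≠ p y) (hι : 2 ≤ Fintype.card ι) {t d : ℕ} [NeZero t]
    (hpart : ∀ i, #{v | p v = i} * (t - 1) ≤ d) (hall : (Fintype.card V - 1) * (t - 1) ≤ 2 * d)
    (hroom : (Fintype.card ι - 1) * (t - 1) ≤ (Fintype.card ι - 2) * d) :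
    sumSlice V t (2 * d : ℕ) ⊆ degResidues G t d := by
  intro c hc
  have hval : ∀ v, (c v).val ≤ t - 1 := fun v => Nat.le_sub_one_of_lt (ZMod.val_lt (c v))
  have hbpart (i : ι) : ∑ v with p v = i, (c v).val ≤ d :=
    (sum_le_card_nsmul _ _ _ fun v _ => hval v).trans (hpart i)
  have hmod : ∑ v, (c v).val ≡ 2 * d [MOD t] := by
    rw [← ZMod.natCast_eq_natCast_iff]
    simpa [sumSlice, ZMod.natCast_val, ZMod.cast_id] using hc
  have hle : ∑ v, (c v).val ≤ 2 * d := by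
    refine hmod.le_of_lt_add ?_
    have := sum_le_card_nsmul univ _ _ fun v _ => hval v
    rw [card_univ, smul_eq_mul] at this
    have := Nat.sub_one_mul (Fintype.card V) (t - 1)
    have := Nat.pos_of_neZero t
    omega
  obtain ⟨K, hK⟩ := (Nat.modEq_iff_dvd' hle).mp hmod
  obtain ⟨D, hDc, hDsum, hDpart⟩ := exists_modEq_sum_eq hp hι (Nat.pos_of_neZero t) hroom K
    (fun v => (c v).val) hbpart (by omega)
  obtain ⟨a, ha, haD⟩ := exists_degVec_eq hAdj d D hDsum hDpart
  refine ⟨a, ha, funext fun v => ?_⟩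
  show (degVec G a v : ZMod t) = c v
  rw [haD, (ZMod.natCast_eq_natCast_iff _ _ _).mpr (hDc v), ZMod.natCast_zmod_val]

lemma le_of_sumSlice_subset_degResidues (hp : Function.Surjective p)
    (hAdj : ∀ x y, G.Adj x y ↔ p x ≠ p y) (hι : 2 ≤ Fintype.card ι) {t d : ℕ}
    (h : sumSlice V t (2 * d : ℕ) ⊆ degResidues G t d) :
    (∀ i, #{v | p v = i} * (t - 1) ≤ d) ∧ (Fintype.card V - 1) * (t - 1) ≤ 2 * d := by
  constructor
  · intro i
    obtain ⟨j, hji⟩ := Fintype.exists_ne_of_one_lt_card hι i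
    obtain ⟨v₀, rfl⟩ := hp j
    have hindep : G.IsIndepSet ({v | p v = i} : Finset V) := fun x hx y hy _ hxy => by
      simp_all
    obtain ⟨a, ha, hle⟩ := exists_card_mul_le_sum_degVec h (A := {v | p v = i}) (v₀ := v₀)
      (by simpa using hji)
    exact ha ▸ hle.trans (sum_degVec_le_degree hindep a)
  · obtain ⟨i⟩ := (Fintype.card_pos_iff.mp (by omega) : Nonempty ι)
    obtain ⟨v₀, -⟩ := hp i
    obtain ⟨a, ha, hle⟩ := exists_card_mul_le_sum_degVec h (notMem_erase v₀ univ)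
    rw [card_erase_of_mem (mem_univ _), card_univ] at hle
    calc _ ≤ _ := hle
      _ ≤ ∑ v, degVec G a v := sum_le_sum_of_subset (erase_subset _ _)
      _ = 2 * d := by rw [sum_degVec, ha]

theorem degResidues_eq_sumSlice_iff (hp : Function.Surjective p)
    (hAdj : ∀ x y, G.Adj x y ↔ p x ≠ p y) (hr : 3 ≤ Fintype.card ι) (hn : 4 ≤ Fintype.card V)
    (t d : ℕ) [NeZero t] :
    degResidues G t d = sumSlice V t (2 * d : ℕ) ↔
      (∀ i, #{v | p v = i} * (t - 1) ≤ d) ∧ (Fintype.card V - 1) * (t - 1) ≤ 2 * d := by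
  constructor
  · intro h
    exact le_of_sumSlice_subset_degResidues hp hAdj (by omega) h.symm.subset
  · rintro ⟨hpart, hall⟩
    exact (degResidues_subset_sumSlice t d).antisymm <|
      sumSlice_subset_degResidues hp hAdj (by omega) hpart hall
        (card_sub_one_mul_le_card_sub_two_mul hp hr hn hpart hall)

end CompleteMultipartite

theorem statement8_general {V ι K : Type*} [Fintype V] [Fintype ι] [DecidableEq ι]
    [Field K] [Fintype K]
    (p : V → ι) (hp : Function.Surjective p) (hr : 3 ≤ Fintype.card ι)
    (hn : 4 ≤ Fintype.card V)
    (G : SimpleGraph V) (hAdj : ∀ x y, G.Adj x y ↔ p x ≠ p y)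
    (q n dstar : ℕ) (hq : q = Fintype.card K) (hncard : n = Fintype.card V)
    (hdstar : dstar =
      max (Finset.univ.sup fun i : ι => (Finset.univ.filter fun v => p v = i).card * (q - 2))
        (((n - 1) * (q - 2) + 1) / 2)) :
    ∀ d : ℕ, hilbFn K G d = (q - 1) ^ (n - 1) ↔ dstar ≤ d := by
  classical
  subst hq hncard hdstar
  intro d
  set t := Fintype.card K - 1 with ht
  have hunits : Nat.card Kˣ = t := by rw [Nat.card_eq_fintype_card, Fintype.card_units]
  have : NeZero t := ⟨by have := Fintype.one_lt_card (α := K); omega⟩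
  have : Nonempty V := Fintype.card_pos_iff.mp (by omega)
  have hsub := degResidues_subset_sumSlice (G := G) t d
  have hncard_iff : (degResidues G t d).ncard = (sumSlice V t (2 * d : ℕ)).ncard ↔
      degResidues G t d = sumSlice V t (2 * d : ℕ) :=
    ⟨fun h => Set.eq_of_subset_of_ncard_le hsub h.ge, congrArg Set.ncard⟩
  rw [hilbFn_eq_ncard_degResidues, hunits, ← ncard_sumSlice V t, hncard_iff,
    degResidues_eq_sumSlice_iff hp hAdj hr hn, max_le_iff, Finset.sup_le_iff]
  simp only [Finset.mem_univ, true_implies, ht, Nat.sub_sub, Nat.reduceAdd]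
  exact and_congr Iff.rfl (by omega)

/-- For the complete multipartite graph `G = K_{α_1,…,α_r}` with
`r ≥ 3` parts and `n ≥ 4` vertices, the Hilbert function of `S/I(X)` attains the value
`(q-1)^{n-1}` exactly in degrees `d ≥ d* = max {α_1(q-2), …, α_r(q-2), ⌈(n-1)(q-2)/2⌉}`;
that is, the Castelnuovo–Mumford regularity of `S/I(X)` is `d*`. -/
theorem statement8 {V ι K : Type*} [Fintype V] [DecidableEq V] [Fintype ι] [DecidableEq ι]
    [Field K] [Fintype K]
    (p : V → ι) (hp : Function.Surjective p) (hr : 3 ≤ Fintype.card ι)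
    (hn : 4 ≤ Fintype.card V)
    (G : SimpleGraph V) (hAdj : ∀ x y, G.Adj x y ↔ p x ≠ p y)
    (q n dstar : ℕ) (hq : q = Fintype.card K) (hncard : n = Fintype.card V)
    (hdstar : dstar =
      max (Finset.univ.sup fun i : ι => (Finset.univ.filter fun v => p v = i).card * (q - 2))
        (((n - 1) * (q - 2) + 1) / 2)) :
    ∀ d : ℕ, hilbFn K G d = (q - 1) ^ (n - 1) ↔ dstar ≤ d :=
  statement8_general p hp hr hn G hAdj q n dstar hq hncard hdstar
end

section
/- Suppose r ≥ 3 and α_1 = #P_1 ≥ 2. Fix vertices v ∈ P_1, u ∈ P_2 and u' ∈ P_3. Then the monomial t_{{u,u'}}^{q−2} · ∏_{w ∈ P_1∖{v}} t_{{w,u}}^{q−2}, which has total degree α_1(q−2), does not belong to the ideal I(X) + (t_{{v,u}}) of S. -/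
/-!
Consider the functional `f ↦ ∑_{x ∈ (K^*)^V} x^a · f_d(x^{e_1}, …, x^{e_s})`, where `f_d` is the
degree-`d` component of `f`. It kills `I(X)`, and by the character sums `∑_{t ∈ K^*} t^k` it
sends a monomial `t^b` of degree `d` to `±1` or `0` according as all vertex degrees of
`x^a · (t^b)(x^e)` are divisible by `q - 1` or not. Taking `a ≡ -(vertex degrees of the target
monomial)` it is nonzero on the target. A monomial of the same degree divisible by `t_{vu}` that
it does not kill has vertex degree `≥ q - 1` at `v` and `≥ q - 2` at the other vertices of `P_1`;
since `P_1` is independent these add up to at most the total degree `α_1 (q - 2)`, which is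
impossible.
-/

open MvPolynomial

namespace MvPolynomial

variable {σ R : Type*} [CommRing R]

theorem eval_homogeneousComponent_mul_eq_zero {f : MvPolynomial σ R} {n : ℕ}
    (hf : f.IsHomogeneous n) {y : σ → R} (hy : eval y f = 0) (s : MvPolynomial σ R) (d : ℕ) :
    eval y (homogeneousComponent d (s * f)) = 0 := by
  induction s using MvPolynomial.induction_on' with
  | monomial b c =>
    rw [homogeneousComponent_of_mem ((isHomogeneous_monomial c rfl).mul hf)]
    split_ifs <;> simp [hy]
  | add s t hs ht => rw [add_mul, map_add, map_add, hs, ht, add_zero]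

end MvPolynomial

open Finset

section Incidence

variable {V : Type*}

noncomputable def edgeIncidence (e : Sym2 V) : V →₀ ℕ :=
  Sym2.lift ⟨fun i j => Finsupp.single i 1 + Finsupp.single j 1, fun _ _ => add_comm _ _⟩ e

@[simp]
theorem edgeIncidence_mk (i j : V) :
    edgeIncidence s(i, j) = Finsupp.single i 1 + Finsupp.single j 1 := rfl

theorem one_le_edgeIncidence {e : Sym2 V} {w : V} (hw : w ∈ e) : 1 ≤ edgeIncidence e w := by
  induction e with
  | _ i j =>
    rcases Sym2.mem_iff.mp hw with rfl | rfl <;> simp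

theorem prod_pow_edgeIncidence [Fintype V] {M : Type*} [CommMonoid M] (y : V → M) (e : Sym2 V) :
    ∏ w, y w ^ edgeIncidence e w = edgeVal y e := by
  induction e with
  | _ i j =>
    rw [← Finsupp.prod_pow, edgeIncidence_mk, Finsupp.prod_add_index' (by simp) (by simp [pow_add])]
    simp [edgeVal]

theorem sum_edgeIncidence_le_one [DecidableEq V] {G : SimpleGraph V} {F : Finset V}
    (hF : G.IsIndepSet (F : Set V)) {e : Sym2 V} (he : e ∈ G.edgeSet) :
    ∑ w ∈ F, edgeIncidence e w ≤ 1 := by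
  induction e with
  | _ i j =>
    have : ¬ (i ∈ F ∧ j ∈ F) := fun ⟨hi, hj⟩ => hF hi hj (G.mem_edgeSet.mp he).ne he
    by_cases hi : i ∈ F <;> by_cases hj : j ∈ F <;>
      simp_all [sum_add_distrib, Finsupp.single_apply]

variable (G : SimpleGraph V)

/-- `vertexDegree G b w` is the exponent of `x_w` in `t^b` evaluated at `t_e = x^e`. -/
noncomputable def vertexDegree : (G.edgeSet →₀ ℕ) →ₗ[ℕ] V →₀ ℕ :=
  Finsupp.linearCombination ℕ fun e => edgeIncidence (e : Sym2 V)

theorem vertexDegree_single (e : G.edgeSet) (k : ℕ) :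
    vertexDegree G (Finsupp.single e k) = k • edgeIncidence (e : Sym2 V) :=
  Finsupp.linearCombination_single _ _ _

theorem le_vertexDegree (b : G.edgeSet →₀ ℕ) {e : G.edgeSet} {w : V} (hw : w ∈ (e : Sym2 V)) :
    b e ≤ vertexDegree G b w := by
  conv_rhs => rw [← Finsupp.single_add_erase e b, map_add, Finsupp.add_apply, vertexDegree_single]
  calc b e ≤ b e * edgeIncidence (e : Sym2 V) w :=
        Nat.le_mul_of_pos_right _ (one_le_edgeIncidence hw)
    _ ≤ _ := Nat.le_add_right _ _

theorem sum_vertexDegree_le_degree [DecidableEq V] {F : Finset V} (hF : G.IsIndepSet (F : Set V))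
    (b : G.edgeSet →₀ ℕ) : ∑ w ∈ F, vertexDegree G b w ≤ b.degree := by
  induction b using Finsupp.induction_linear with
  | zero => simp
  | add b c hb hc =>
    simp only [map_add, Finsupp.add_apply, sum_add_distrib]
    exact Nat.add_le_add hb hc
  | single e k =>
    simp only [vertexDegree_single, Finsupp.smul_apply, smul_eq_mul, ← mul_sum,
      Finsupp.degree_single]
    exact mul_le_of_le_one_right (Nat.zero_le k) (sum_edgeIncidence_le_one hF e.2)

theorem card_mul_lt_degree_of_modEq [DecidableEq V] {F : Finset V}
    (hF : G.IsIndepSet (F : Set V)) {v : V} (hv : v ∈ F) {e₀ : G.edgeSet}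
    (he₀ : v ∈ (e₀ : Sym2 V)) {n : ℕ} (hn : 0 < n) {m : V → ℕ}
    (hmv : m v = 0) (hm : ∀ w ∈ F.erase v, m w = n - 1) {b : G.edgeSet →₀ ℕ} (hb : b e₀ ≠ 0)
    (hmod : ∀ w ∈ F, vertexDegree G b w ≡ m w [MOD n]) :
    #F * (n - 1) < b.degree := by
  have hdeg_v : n ≤ vertexDegree G b v := by
    refine Nat.le_of_dvd ?_ (Nat.modEq_zero_iff_dvd.mp (hmv ▸ hmod v hv))
    exact lt_of_lt_of_le (Nat.pos_of_ne_zero hb) (le_vertexDegree G b he₀)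
  have hdeg_w : ∀ w ∈ F.erase v, n - 1 ≤ vertexDegree G b w := fun w hw =>
    calc n - 1 = (n - 1) % n := (Nat.mod_eq_of_lt (by omega)).symm
      _ = vertexDegree G b w % n := by rw [← hm w hw]; exact (hmod w (mem_of_mem_erase hw)).symm
      _ ≤ vertexDegree G b w := Nat.mod_le _ _
  have hsum : #(F.erase v) * (n - 1) ≤ ∑ w ∈ F.erase v, vertexDegree G b w :=
    card_nsmul_le_sum _ _ _ hdeg_w
  calc #F * (n - 1) = (n - 1) + #(F.erase v) * (n - 1) := by
        rw [← card_erase_add_one hv]; ring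
    _ < vertexDegree G b v + ∑ w ∈ F.erase v, vertexDegree G b w := by omega
    _ = ∑ w ∈ F, vertexDegree G b w := add_sum_erase F _ hv
    _ ≤ b.degree := sum_vertexDegree_le_degree G hF b

theorem prod_edgeVal_pow_eq_prod_pow_vertexDegree [Fintype V] {M : Type*} [CommMonoid M] (y : V → M)
    (b : G.edgeSet →₀ ℕ) :
    (b.prod fun e k => edgeVal y (e : Sym2 V) ^ k) = ∏ w, y w ^ vertexDegree G b w := by
  induction b using Finsupp.induction_linear with
  | zero => simp
  | add b c hb hc =>
    rw [Finsupp.prod_add_index' (by simp) (by simp [pow_add]), hb, hc, map_add,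
      ← prod_mul_distrib]
    simp [pow_add]
  | single e k =>
    simp [vertexDegree_single, pow_mul', prod_pow, prod_pow_edgeIncidence]

end Incidence

section TorusFunctional

variable {V K : Type*} [Field K] (G : SimpleGraph V)

noncomputable def torusPoint (x : V → Kˣ) (e : G.edgeSet) : K := edgeVal (fun v => (x v : K)) e

theorem eval_torusPoint_homogeneousComponent_eq_zero {g : MvPolynomial G.edgeSet K}
    (hg : g ∈ vanishingIdeal K G) (d : ℕ) (x : V → Kˣ) :
    eval (torusPoint G x) (homogeneousComponent d g) = 0 := by
  suffices ∀ s, eval (torusPoint G x) (homogeneousComponent d (s * g)) = 0 by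
    simpa using this 1
  induction hg using Submodule.span_induction with
  | mem f hf =>
    obtain ⟨⟨n, hn⟩, hvan⟩ := hf
    exact fun s => eval_homogeneousComponent_mul_eq_zero hn (hvan x) s d
  | zero => simp
  | add f g _ _ hf hg => intro s; rw [mul_add, map_add, map_add, hf, hg, add_zero]
  | smul r f _ hf => intro s; rw [smul_eq_mul, ← mul_assoc]; exact hf (s * r)

variable [Fintype V] [DecidableEq V] [Fintype K] [DecidableEq K]

theorem sum_units_prod_pow (m : V → ℕ) :
    ∑ x : V → Kˣ, ∏ w, (x w : K) ^ m w =
      if ∀ w, Fintype.card K - 1 ∣ m w then (-1) ^ Fintype.card V else 0 := by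
  rw [← Fintype.prod_sum (fun w (t : Kˣ) => (t : K) ^ m w)]
  simp_rw [FiniteField.sum_pow_units]
  split_ifs with h
  · simp [h]
  · obtain ⟨w, hw⟩ := not_forall.mp h
    exact prod_eq_zero (mem_univ w) (if_neg hw)

variable (K) in
noncomputable def torusFunctional (a : V → ℕ) (d : ℕ) : MvPolynomial G.edgeSet K →ₗ[K] K :=
  ∑ x : V → Kˣ, (∏ w, (x w : K) ^ a w) •
    ((aeval (torusPoint G x)).toLinearMap ∘ₗ homogeneousComponent d)

theorem torusFunctional_apply (a : V → ℕ) (d : ℕ) (f : MvPolynomial G.edgeSet K) :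
    torusFunctional K G a d f =
      ∑ x : V → Kˣ, (∏ w, (x w : K) ^ a w) * eval (torusPoint G x) (homogeneousComponent d f) := by
  simp [torusFunctional]

theorem torusFunctional_monomial (a : V → ℕ) (d : ℕ) (b : G.edgeSet →₀ ℕ) (c : K) :
    torusFunctional K G a d (monomial b c) =
      if b.degree = d ∧ ∀ w, Fintype.card K - 1 ∣ a w + vertexDegree G b w then
        c * (-1) ^ Fintype.card V
      else 0 := by
  rw [torusFunctional_apply, homogeneousComponent_of_mem (isHomogeneous_monomial c rfl)]
  by_cases hd : b.degree = d
  · simp_rw [if_pos hd.symm, eval_monomial, torusPoint,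
      prod_edgeVal_pow_eq_prod_pow_vertexDegree, mul_left_comm _ c,
      ← prod_mul_distrib, ← pow_add, ← mul_sum, sum_units_prod_pow]
    simp [hd]
  · simp [hd, Ne.symm hd]

theorem torusFunctional_eq_zero_of_mem_vanishingIdeal (a : V → ℕ) (d : ℕ)
    {g : MvPolynomial G.edgeSet K} (hg : g ∈ vanishingIdeal K G) :
    torusFunctional K G a d g = 0 := by
  simp [torusFunctional_apply, eval_torusPoint_homogeneousComponent_eq_zero G hg]

theorem torusFunctional_X_mul_eq_zero (a : V → ℕ) (d : ℕ) (e₀ : G.edgeSet)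
    (h : ∀ b : G.edgeSet →₀ ℕ, b.degree = d → b e₀ ≠ 0 →
      ¬ ∀ w, Fintype.card K - 1 ∣ a w + vertexDegree G b w)
    (s : MvPolynomial G.edgeSet K) : torusFunctional K G a d (X e₀ * s) = 0 := by
  induction s using MvPolynomial.induction_on' with
  | monomial b c =>
    rw [← pow_one (X e₀), ← monomial_single_add, torusFunctional_monomial,
      if_neg fun ⟨hd, hdvd⟩ => h _ hd (by simp) hdvd]
  | add s t hs ht => rw [mul_add, map_add, hs, ht, add_zero]

end TorusFunctional

theorem Nat.dvd_sub_one_mul_add_iff_modEq {n : ℕ} (hn : 0 < n) (m k : ℕ) :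
    n ∣ (n - 1) * m + k ↔ k ≡ m [MOD n] := by
  have h0 : (n - 1) * m + m ≡ 0 [MOD n] :=
    Nat.modEq_zero_iff_dvd.mpr ⟨m, by rw [← add_one_mul, Nat.sub_add_cancel hn]⟩
  rw [← Nat.modEq_zero_iff_dvd]
  exact ⟨fun h => Nat.ModEq.add_left_cancel' _ (h.trans h0.symm),
    fun h => (h.add_left _).trans h0⟩

section Certificate

variable {V K : Type*} [Fintype V] [DecidableEq V] [Field K] [Fintype K] (G : SimpleGraph V)

theorem monomial_notMem_vanishingIdeal_sup_span_X {bm : G.edgeSet →₀ ℕ} {c : K} (hc : c ≠ 0)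
    (e₀ : G.edgeSet)
    (h : ∀ b : G.edgeSet →₀ ℕ, b.degree = bm.degree → b e₀ ≠ 0 →
      ¬ ∀ w, vertexDegree G b w ≡ vertexDegree G bm w [MOD Fintype.card K - 1]) :
    monomial bm c ∉ vanishingIdeal K G ⊔ Ideal.span {X e₀} := by
  classical
  have hq : 0 < Fintype.card K - 1 := by have := Fintype.one_lt_card (α := K); omega
  -- `a ≡ -vertexDegree G bm` modulo `q - 1`, so the functional detects exactly the monomials
  -- whose vertex degrees are congruent to those of `bm`.
  set a : V → ℕ := fun w => (Fintype.card K - 1 - 1) * vertexDegree G bm w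
  have ha : ∀ b w, Fintype.card K - 1 ∣ a w + vertexDegree G b w ↔
      vertexDegree G b w ≡ vertexDegree G bm w [MOD Fintype.card K - 1] :=
    fun b w => Nat.dvd_sub_one_mul_add_iff_modEq hq _ _
  intro hmem
  obtain ⟨g, hg, _, hs, hsum⟩ := Submodule.mem_sup.mp hmem
  obtain ⟨s, rfl⟩ := Ideal.mem_span_singleton.mp hs
  have := congrArg (torusFunctional K G a bm.degree) hsum
  rw [map_add, torusFunctional_eq_zero_of_mem_vanishingIdeal G a _ hg,
    torusFunctional_X_mul_eq_zero G a _ e₀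
      (fun b hd hb hdvd => h b hd hb fun w => (ha b w).mp (hdvd w)),
    torusFunctional_monomial, if_pos ⟨rfl, fun w => (ha bm w).mpr rfl⟩] at this
  simp [hc] at this

end Certificate

theorem MvPolynomial.X_pow_mul_prod_X_pow {σ ι R : Type*} [CommSemiring R] (i : σ)
    (s : Finset ι) (f : ι → σ) (k : ℕ) :
    X i ^ k * ∏ j ∈ s, X (f j) ^ k =
      monomial (Finsupp.single i k + ∑ j ∈ s, Finsupp.single (f j) k) (1 : R) := by
  simp [monomial_single_add, monomial_sum_one, X_pow_eq_monomial]

/-- (The degree `α_1(q-2)` monomial outside `I(X) + (t₁)`.)  Suppose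
`r ≥ 3` and the part `P_{i₁}` has at least `2` elements.  Fix `v ∈ P_{i₁}`, `u ∈ P_{i₂}`
and `u' ∈ P_{i₃}` (with `i₁, i₂, i₃` pairwise distinct).  Then the monomial
`t_{{u,u'}}^{q-2} · ∏_{w ∈ P_{i₁} ∖ {v}} t_{{w,u}}^{q-2}` does not belong to the ideal
`I(X) + (t_{{v,u}})`. -/
theorem statement9 {V ι K : Type*} [Fintype V] [DecidableEq V] [DecidableEq ι]
    [Field K] [Fintype K]
    (p : V → ι)
    (G : SimpleGraph V) (hAdj : ∀ x y, G.Adj x y ↔ p x ≠ p y)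
    (i₁ i₂ i₃ : ι) (h12 : i₁ ≠ i₂) (h13 : i₁ ≠ i₃) (h23 : i₂ ≠ i₃)
    (v u u' : V) (hv : p v = i₁) (hu : p u = i₂) (hu' : p u' = i₃) :
    (X (⟨s(u, u'), G.mem_edgeSet.mpr ((hAdj u u').mpr (by rw [hu, hu']; exact h23))⟩ :
          G.edgeSet) ^ (Fintype.card K - 2) *
        ∏ w ∈ ((Finset.univ.filter fun w => p w = i₁).erase v).attach,
          X (⟨s(w.1, u), G.mem_edgeSet.mpr ((hAdj w.1 u).mpr (by
              have hw := (Finset.mem_filter.mp (Finset.mem_of_mem_erase w.2)).2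
              rw [hw, hu]; exact h12))⟩ : G.edgeSet) ^ (Fintype.card K - 2) :
        MvPolynomial G.edgeSet K) ∉
      vanishingIdeal K G ⊔ Ideal.span
        {X ⟨s(v, u), G.mem_edgeSet.mpr ((hAdj v u).mpr (by rw [hv, hu]; exact h12))⟩} := by
  classical
  have hq : 2 ≤ Fintype.card K := Fintype.one_lt_card
  have hvF : v ∈ univ.filter fun w => p w = i₁ := by simp [hv]
  have hF : G.IsIndepSet (univ.filter fun w => p w = i₁ : Set V) :=
    fun x hx y hy _ hxy => (hAdj x y).mp hxy (by simp_all)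
  have hu_ne : ∀ w, p w = i₁ → u ≠ w := fun w hw h => h12 (by rw [← hw, ← h, hu])
  have hu'_ne : ∀ w, p w = i₁ → u' ≠ w := fun w hw h => h13 (by rw [← hw, ← h, hu'])
  rw [X_pow_mul_prod_X_pow]
  generalize hQ : Fintype.card K - 2 = Q
  refine monomial_notMem_vanishingIdeal_sup_span_X G one_ne_zero _ fun b hdeg hb hmod => ?_
  have hlt := card_mul_lt_degree_of_modEq G hF hvF (Sym2.mem_mk_left v u)
    (n := Fintype.card K - 1) (by omega) ?_ ?_ hb fun w _ => hmod w
  · simp only [hdeg, map_add, map_sum, Finsupp.degree_single, sum_const, card_attach,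
      smul_eq_mul, ← card_erase_add_one hvF, show Fintype.card K - 1 - 1 = Q by omega] at hlt
    linarith
  · simp +contextual [vertexDegree_single, Finsupp.single_apply, hu_ne v hv, hu'_ne v hv]
  · intro w hw
    obtain ⟨-, hpw⟩ := mem_filter.mp (mem_of_mem_erase hw)
    rw [show Fintype.card K - 1 - 1 = Q by omega]
    simp [vertexDegree_single, Finsupp.single_apply, hu_ne w hpw, hu'_ne w hpw,
      sum_attach _ fun x => if x = w then Q else 0, hw]
end

section
/- Let f = t^a − t^b be a binomial with supp(a) ∩ supp(b) = ∅ and with 0 ≤ a_i ≤ q−2 and 0 ≤ b_i ≤ q−2 for all 1 ≤ i ≤ s, and suppose f(x^{e_1},…,x^{e_s}) = 0 for every x ∈ (K*)^n. Then no vertex of G is incident to exactly one edge of the weighted subgraph H_f = H_{t^a} ∪ H_{t^b}; that is, for every vertex v of G, the number of indices i with v an endpoint of e_i and a_i + b_i ≥ 1 is not equal to 1. -/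
open MvPolynomial

/-- Let `f = t^a - t^b` be a binomial with disjoint supports, all
exponents at most `q - 2`, vanishing on the algebraic toric set parameterized by the
edges of `G`.  Then no vertex of `G` is incident to exactly one edge of the weighted
subgraph `H_f = H_{t^a} ∪ H_{t^b}`. -/
theorem statement11 {V K : Type*} [Fintype V] [DecidableEq V] [Field K] [Fintype K]
    (G : SimpleGraph V) [Fintype G.edgeSet]
    (a b : G.edgeSet →₀ ℕ)
    (hdisj : Disjoint a.support b.support)
    (ha : ∀ e, a e ≤ Fintype.card K - 2) (hb : ∀ e, b e ≤ Fintype.card K - 2)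
    (hvanish : ∀ x : V → Kˣ,
      MvPolynomial.eval (fun e : G.edgeSet => edgeVal (fun w => (x w : K)) (e : Sym2 V))
        ((monomial a 1 : MvPolynomial G.edgeSet K) - monomial b 1) = 0) :
    ∀ v : V,
      (Finset.univ.filter fun e : G.edgeSet => v ∈ (e : Sym2 V) ∧ 1 ≤ a e + b e).card ≠ 1 := by

  classical
  intro v hcard
  obtain ⟨e0, he0⟩ := Finset.card_eq_one.mp hcard
  have hmem : ∀ e : G.edgeSet, (v ∈ (e : Sym2 V) ∧ 1 ≤ a e + b e) ↔ e = e0 := by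
    intro e
    rw [← Finset.mem_singleton, ← he0, Finset.mem_filter]
    simp
  have hve0 : v ∈ (e0 : Sym2 V) ∧ 1 ≤ a e0 + b e0 := (hmem e0).mpr rfl
  obtain ⟨g, hg⟩ := IsCyclic.exists_generator (α := Kˣ)
  have horder : orderOf g = Fintype.card K - 1 := by
    rw [orderOf_eq_card_of_forall_mem_zpowers hg, Nat.card_eq_fintype_card, Fintype.card_units]
  set x : V → Kˣ := fun w => if w = v then g else 1 with hx
  have hval : ∀ e : G.edgeSet,
      edgeVal (fun w => (x w : K)) (e : Sym2 V)
        = if v ∈ (e : Sym2 V) then (g : K) else 1 := by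
    rintro ⟨e, he⟩
    induction e using Sym2.inductionOn with
    | hf i j =>
      have hij : i ≠ j := G.ne_of_adj ((SimpleGraph.mem_edgeSet G).mp he)
      simp only [edgeVal, Sym2.lift_mk, Sym2.mem_iff]
      rcases eq_or_ne v i with rfl | hvi
      · simp [hx, hij.symm, if_neg (Ne.symm hij)]
      · rcases eq_or_ne v j with rfl | hvj
        · simp [hx, hvi.symm, Ne.symm hvi]
        · simp [hx, Ne.symm hvi, Ne.symm hvj, hvi, hvj]
  have key : ∀ (c : G.edgeSet →₀ ℕ), (∀ e, c e ≤ a e + b e) →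
      (c.prod fun e k => edgeVal (fun w => (x w : K)) (e : Sym2 V) ^ k) = (g : K) ^ c e0 := by
    intro c hc
    have h1 : ∀ e ∈ c.support, e ≠ e0 →
        edgeVal (fun w => (x w : K)) (e : Sym2 V) ^ c e = 1 := by
      intro e hes hne
      rw [hval e]
      by_cases hv : v ∈ (e : Sym2 V)
      · exact absurd ((hmem e).mp ⟨hv,
          le_trans (Nat.one_le_iff_ne_zero.mpr (Finsupp.mem_support_iff.mp hes)) (hc e)⟩) hne
      · rw [if_neg hv, one_pow]
    have h2 : e0 ∉ c.support →
        edgeVal (fun w => (x w : K)) (e0 : Sym2 V) ^ c e0 = 1 := by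
      intro h
      rw [Finsupp.notMem_support_iff.mp h, pow_zero]
    rw [Finsupp.prod, Finset.prod_eq_single e0 h1 h2, hval e0, if_pos hve0.1]
  have hev := hvanish x
  rw [map_sub, eval_monomial, eval_monomial, one_mul, one_mul,
    key a (fun e => Nat.le_add_right _ _), key b (fun e => Nat.le_add_left _ _),
    sub_eq_zero] at hev
  have hu : g ^ a e0 = g ^ b e0 := Units.ext (by simpa using hev)
  have hq : 2 ≤ Fintype.card K := Fintype.one_lt_card
  have contra : ∀ c : ℕ, 1 ≤ c → c ≤ Fintype.card K - 2 → g ^ c ≠ 1 := by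
    intro c h1 h2 hgc
    have := Nat.le_of_dvd h1 (horder ▸ orderOf_dvd_of_pow_eq_one hgc)
    omega
  rcases Nat.eq_zero_or_pos (a e0) with h0 | h0
  · exact contra (b e0) (by omega) (hb e0) (by rw [← hu, h0, pow_zero])
  · have hb0 : b e0 = 0 := by
      by_contra hb0
      exact Finset.disjoint_left.mp hdisj (Finsupp.mem_support_iff.mpr h0.ne')
        (Finsupp.mem_support_iff.mpr hb0)
    exact contra (a e0) h0 (ha e0) (by rw [hu, hb0, pow_zero])
end
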